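/- arXiv:1405.2464 — 2 statements merged into one kernel-verified Lean document; each statement's English description precedes it below -/
import Mathlib

section
/- The minimal number k(n) such that every collection of at least k quartets (4-element subsets of [n]) is phylogenetically decisive is greater than C(n,4) − (n − 3); i.e., there exists a collection S' of quartets with |S'| = C(n,4) − (n − 3) that is not decisive. -/
open SimpleGraph Finset

/-- The edge `e` separates `a,b` from `c,d`: after deleting `e`, `a` and `b` lie in one
connected component and `c` and `d` in the other. -/
def Separates {V : Type} (G : SimpleGraph V) (e : Sym2 V) (a b c d : V) : Prop :=
  e ∈ G.edgeSet ∧ (G.deleteEdges {e}).Reachable a b ∧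
    (G.deleteEdges {e}).Reachable c d ∧ ¬ (G.deleteEdges {e}).Reachable a c

/-- A binary phylogenetic tree on taxon set `X`: a finite unrooted tree all of whose
vertices have degree 1 or 3, with its leaves bijectively labeled by `X`. -/
structure PhyloTree (X : Type) where
  V : Type
  finV : Finite V
  g : SimpleGraph V
  tree : g.IsTree
  deg : ∀ v : V, Nat.card (g.neighborSet v) = 1 ∨ Nat.card (g.neighborSet v) = 3
  lab : X → V
  inj : Function.Injective lab
  leaf_iff : ∀ v : V, Nat.card (g.neighborSet v) = 1 ↔ ∃ x, lab x = v

/-- `T` displays the quartet tree `ab|cd`. -/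
def PhyloTree.Displays {X : Type} (T : PhyloTree X) (a b c d : X) : Prop :=
  ∃ e, Separates T.g e (T.lab a) (T.lab b) (T.lab c) (T.lab d)

/-- The quartet tree `ab|cd` distinguishes the edge `e` of `T`: `e` is the unique edge
separating `{a,b}` from `{c,d}`. -/
def PhyloTree.Distinguishes {X : Type} (T : PhyloTree X) (e : Sym2 T.V) (a b c d : X) : Prop :=
  Separates T.g e (T.lab a) (T.lab b) (T.lab c) (T.lab d) ∧
    ∀ e', Separates T.g e' (T.lab a) (T.lab b) (T.lab c) (T.lab d) → e' = e

/-- Label-preserving isomorphism of phylogenetic trees on the same taxon set. -/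
def PhyloTree.Iso {X : Type} (T T' : PhyloTree X) : Prop :=
  ∃ f : T.V ≃ T'.V, (∀ u v, T.g.Adj u v ↔ T'.g.Adj (f u) (f v)) ∧
    ∀ x, f (T.lab x) = T'.lab x

/-- `T` and `T'` induce the same subtree on the four-element taxon subset `Y`
(for `|Y| = 4` this says they display the same quartet trees on `Y`). -/
def AgreeOn {X : Type} (T T' : PhyloTree X) (Y : Finset X) : Prop :=
  ∀ a b c d, a ∈ Y → b ∈ Y → c ∈ Y → d ∈ Y →
    (T.Displays a b c d ↔ T'.Displays a b c d)

/-- A collection of quartets (4-element subsets of `X`) is phylogenetically decisive if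
any two binary phylogenetic trees on `X` agreeing on every member are equal
(i.e. label-preservingly isomorphic). -/
def Decisive {X : Type} (S : Finset (Finset X)) : Prop :=
  ∀ T T' : PhyloTree X, (∀ Y ∈ S, AgreeOn T T' Y) → T.Iso T'

/-- A quartet tree `ab|cd`, recorded as the ordered data of its two pairs. -/
structure Q4 (X : Type) where
  a : X
  b : X
  c : X
  d : X

/-- The support of a quartet tree. -/
def Q4.supp {X : Type} [DecidableEq X] (q : Q4 X) : Finset X := {q.a, q.b, q.c, q.d}

/-- The quartet tree as an unordered pair of unordered pairs (its topology). -/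
def Q4.toSym {X : Type} (q : Q4 X) : Sym2 (Sym2 X) := s(s(q.a, q.b), s(q.c, q.d))

/-!
Let `T` be the caterpillar `(0 1) 2 3 ⋯ (n-2 n-1)` and `T'` the same tree with the labels `1` and
`2` exchanged. They are not isomorphic, since `0, 1` is a cherry of `T` but not of `T'`.
In a caterpillar, `ab|cd` is displayed iff one of the bipartitions induced by the edges (a single
taxon, or the taxa hanging at spine positions `≤ k`) separates `{a, b}` from `{c, d}`. The
bipartitions of `T` and `T'` differ only at the cherry: `{0, 1}` against `{0, 2}`. On a taxon set
missing one of `0, 1, 2`, each of these coincides with a bipartition of the other tree (a single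
taxon, or the cut `{0, 1, 2}` at position `1`), so `T` and `T'` agree on every quartet not
containing `{0, 1, 2}`.
-/

theorem SimpleGraph.Reachable.iff_of_forall_adj {V : Type*} {G : SimpleGraph V} (P : V → Prop)
    (hP : ∀ u v, G.Adj u v → (P u ↔ P v)) {u v : V} (h : G.Reachable u v) : P u ↔ P v := by
  obtain ⟨w⟩ := h
  induction w with
  | nil => rfl
  | cons hadj _ ih => exact (hP _ _ hadj).trans ih

section SplitBy

variable {X : Type}

def SplitBy (P : X → Prop) (a b c d : X) : Prop :=
  (P a ↔ P b) ∧ (P c ↔ P d) ∧ ¬ (P a ↔ P c)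

theorem splitBy_congr {P Q : X → Prop} {Y : Finset X} (hPQ : ∀ y ∈ Y, (P y ↔ Q y))
    {a b c d : X} (ha : a ∈ Y) (hb : b ∈ Y) (hc : c ∈ Y) (hd : d ∈ Y) :
    SplitBy P a b c d ↔ SplitBy Q a b c d := by
  simp only [SplitBy, hPQ a ha, hPQ b hb, hPQ c hc, hPQ d hd]

theorem exists_splitBy_of_forall_exists_eqOn {C C' : (X → Prop) → Prop} {Y : Finset X}
    (h : ∀ P, C P → ∃ Q, C' Q ∧ ∀ y ∈ Y, (P y ↔ Q y))
    {a b c d : X} (ha : a ∈ Y) (hb : b ∈ Y) (hc : c ∈ Y) (hd : d ∈ Y) :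
    (∃ P, C P ∧ SplitBy P a b c d) → ∃ Q, C' Q ∧ SplitBy Q a b c d := by
  rintro ⟨P, hP, hsplit⟩
  obtain ⟨Q, hQ, hPQ⟩ := h P hP
  exact ⟨Q, hQ, (splitBy_congr hPQ ha hb hc hd).mp hsplit⟩

end SplitBy

namespace PhyloTree

variable {X : Type}

def relabel (T : PhyloTree X) (σ : Equiv.Perm X) : PhyloTree X where
  __ := T
  lab := T.lab ∘ σ
  inj := T.inj.comp σ.injective
  leaf_iff v := (T.leaf_iff v).trans σ.surjective.exists

theorem relabel_displays (T : PhyloTree X) (σ : Equiv.Perm X) (a b c d : X) :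
    (T.relabel σ).Displays a b c d ↔ T.Displays (σ a) (σ b) (σ c) (σ d) := Iff.rfl

def IsCherry (T : PhyloTree X) (x y : X) : Prop :=
  ∃ v, T.g.Adj (T.lab x) v ∧ T.g.Adj (T.lab y) v

theorem Iso.isCherry {T T' : PhyloTree X} (h : T.Iso T') {x y : X} (hxy : T.IsCherry x y) :
    T'.IsCherry x y := by
  obtain ⟨f, hadj, hlab⟩ := h
  obtain ⟨v, hx, hy⟩ := hxy
  exact ⟨f v, hlab x ▸ (hadj _ _).mp hx, hlab y ▸ (hadj _ _).mp hy⟩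

end PhyloTree

namespace Caterpillar

variable {X : Type} {m : ℕ} (pos : X → Fin m)

/-- Taxon `x` hangs off the vertex `pos x` of the spine, a path on `Fin m`. -/
def graph : SimpleGraph (X ⊕ Fin m) where
  Adj u v := match u, v with
    | .inl _, .inl _ => False
    | .inl x, .inr k => k = pos x
    | .inr k, .inl x => k = pos x
    | .inr k, .inr l => (k : ℕ) + 1 = l ∨ (l : ℕ) + 1 = k
  symm := ⟨by rintro (x | k) (y | l) h <;> simp only at h ⊢ <;> omega⟩
  loopless := ⟨by rintro (x | k) h <;> simp only at h; omega⟩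

variable {pos}

@[simp] theorem adj_inl_inl {x y : X} : ¬ (graph pos).Adj (.inl x) (.inl y) := id

@[simp] theorem adj_inl_inr {x : X} {k : Fin m} : (graph pos).Adj (.inl x) (.inr k) ↔ k = pos x :=
  Iff.rfl

@[simp] theorem adj_inr_inl {x : X} {k : Fin m} : (graph pos).Adj (.inr k) (.inl x) ↔ k = pos x :=
  Iff.rfl

@[simp] theorem adj_inr_inr {k l : Fin m} :
    (graph pos).Adj (.inr k) (.inr l) ↔ (k : ℕ) + 1 = l ∨ (l : ℕ) + 1 = k :=
  Iff.rfl

theorem adj_inl_iff {x : X} {v : X ⊕ Fin m} : (graph pos).Adj (.inl x) v ↔ v = .inr (pos x) := by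
  rcases v with y | k <;> simp

variable (pos) in
def pendant (x : X) : Sym2 (X ⊕ Fin m) := s(.inl x, .inr (pos x))

def spine (k : ℕ) (hk : k + 1 < m) : Sym2 (X ⊕ Fin m) := s(.inr ⟨k, by omega⟩, .inr ⟨k + 1, hk⟩)

theorem exists_eq_pendant_or_spine {e : Sym2 (X ⊕ Fin m)} (he : e ∈ (graph pos).edgeSet) :
    (∃ x, e = pendant pos x) ∨ ∃ k hk, e = spine k hk := by
  induction e with | _ u v => ?_
  rcases u with x | k <;> rcases v with y | l <;> simp only [mem_edgeSet] at he
  · simp at he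
  · exact .inl ⟨x, by simp_all [pendant]⟩
  · exact .inl ⟨y, by simp_all [pendant, Sym2.eq_swap]⟩
  · rcases (adj_inr_inr.mp he) with h | h
    · exact .inr ⟨k, h ▸ l.isLt, by simp [spine, h]⟩
    · exact .inr ⟨l, h ▸ k.isLt, by simp [spine, h, Sym2.eq_swap]⟩

theorem reachable_inr_of_forall_adj {G : SimpleGraph (X ⊕ Fin m)} {lo hi : ℕ}
    (h : ∀ k l : Fin m, lo ≤ k → (l : ℕ) ≤ hi → (k : ℕ) + 1 = l → G.Adj (.inr k) (.inr l))
    {k l : Fin m} (hk : lo ≤ k ∧ k ≤ hi) (hl : lo ≤ l ∧ l ≤ hi) :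
    G.Reachable (.inr k) (.inr l) := by
  wlog hkl : k ≤ l generalizing k l
  · exact (this hl hk (le_of_not_ge hkl)).symm
  obtain ⟨d, hd⟩ := Nat.exists_eq_add_of_le (Fin.le_def.mp hkl)
  induction d generalizing l with
  | zero => rw [Fin.ext (hd.trans k.val.add_zero)]
  | succ d ih =>
    have hkd : lo ≤ k + d := hk.1.trans (Nat.le_add_right _ _)
    exact (ih (l := ⟨k + d, by omega⟩) ⟨hkd, by simp; omega⟩ (Nat.le_add_right _ _) rfl).trans
      (h _ l hkd hl.2 (by simp; omega)).reachable

theorem reachable_inr {G : SimpleGraph (X ⊕ Fin m)}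
    (h : ∀ k l : Fin m, (k : ℕ) + 1 = l → G.Adj (.inr k) (.inr l)) (k l : Fin m) :
    G.Reachable (.inr k) (.inr l) :=
  reachable_inr_of_forall_adj (lo := 0) (hi := m) (fun i j _ _ => h i j)
    ⟨Nat.zero_le _, k.isLt.le⟩ ⟨Nat.zero_le _, l.isLt.le⟩

variable (pos) in
def side (k : ℕ) : X ⊕ Fin m → Prop :=
  Sum.elim (fun x => (pos x : ℕ) ≤ k) (fun i => (i : ℕ) ≤ k)

theorem side_iff_of_reachable {k : ℕ} {hk : k + 1 < m} {u v : X ⊕ Fin m}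
    (h : ((graph pos).deleteEdges {spine k hk}).Reachable u v) : side pos k u ↔ side pos k v := by
  refine h.iff_of_forall_adj _ ?_
  rintro (x | i) (y | j) hadj <;>
    simp only [deleteEdges_adj, Set.mem_singleton_iff, adj_inl_inl, adj_inl_inr, adj_inr_inl,
      adj_inr_inr] at hadj
  · exact hadj.1.elim
  · simp only [side, Sum.elim_inl, Sum.elim_inr, hadj.1]
  · simp only [side, Sum.elim_inl, Sum.elim_inr, hadj.1]
  · simp only [spine, Sym2.eq_iff, Sum.inr.injEq, Fin.ext_iff] at hadj
    simp only [side, Sum.elim_inr]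
    omega

theorem reachable_deleteEdges_spine_iff {k : ℕ} (hk : k + 1 < m) (y z : X) :
    ((graph pos).deleteEdges {spine k hk}).Reachable (.inl y) (.inl z) ↔
      ((pos y : ℕ) ≤ k ↔ (pos z : ℕ) ≤ k) := by
  refine ⟨side_iff_of_reachable, fun hyz => ?_⟩
  have hpend : ∀ x, ((graph pos).deleteEdges {spine k hk}).Adj (.inl x) (.inr (pos x)) := by
    simp [spine]
  have hchain : ∀ lo hi, lo ≤ (pos y : ℕ) ∧ (pos y : ℕ) ≤ hi → lo ≤ (pos z : ℕ) ∧ (pos z : ℕ) ≤ hi →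
      (k + 1 ≤ lo ∨ hi ≤ k) → ((graph pos).deleteEdges {spine k hk}).Reachable (.inl y) (.inl z) :=
    fun lo hi hy hz hlohi => (hpend y).reachable.trans <| (Reachable.trans
      (reachable_inr_of_forall_adj (fun i j hi hj hij => by
        simp [spine, Fin.ext_iff]; omega) hy hz) (hpend z).reachable.symm)
  by_cases hy : (pos y : ℕ) ≤ k
  · exact hchain 0 k ⟨by omega, hy⟩ ⟨by omega, hyz.mp hy⟩ (.inr le_rfl)
  · exact hchain (k + 1) m ⟨by omega, by omega⟩ ⟨by omega, by omega⟩ (.inl le_rfl)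

theorem eq_inl_iff_of_reachable {x : X} {u v : X ⊕ Fin m}
    (h : ((graph pos).deleteEdges {pendant pos x}).Reachable u v) : u = .inl x ↔ v = .inl x := by
  refine h.iff_of_forall_adj (· = .inl x) ?_
  rintro (y | i) (z | j) hadj <;>
    simp only [deleteEdges_adj, Set.mem_singleton_iff, adj_inl_inl, adj_inl_inr, adj_inr_inl,
      pendant] at hadj
  · exact hadj.1.elim
  · simp only [reduceCtorEq, iff_false, Sum.inl.injEq]
    rintro rfl
    exact hadj.2 (by rw [hadj.1])
  · simp only [reduceCtorEq, false_iff, Sum.inl.injEq]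
    rintro rfl
    exact hadj.2 (by rw [hadj.1, Sym2.eq_swap])
  · simp

theorem reachable_deleteEdges_pendant_iff (x y z : X) :
    ((graph pos).deleteEdges {pendant pos x}).Reachable (.inl y) (.inl z) ↔ (y = x ↔ z = x) := by
  refine ⟨fun h => by simpa using eq_inl_iff_of_reachable h, fun hyz => ?_⟩
  by_cases hy : y = x
  · rw [hy, hyz.mp hy]
  have hpend : ∀ w, w ≠ x → ((graph pos).deleteEdges {pendant pos x}).Adj (.inl w) (.inr (pos w)) :=
    fun w hw => by simp [pendant, hw]
  refine (hpend y hy).reachable.trans <| (reachable_inr (fun k l hkl => ?_) _ _).trans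
    (hpend z (hyz.not.mp hy)).reachable.symm
  simp [pendant, hkl]

theorem preconnected : (graph pos).Preconnected := by
  have hinr := reachable_inr (G := graph pos) (fun k l hkl => by simp [hkl])
  have hinl : ∀ x, (graph pos).Reachable (.inl x) (.inr (pos x)) := fun x => Adj.reachable (by simp)
  rintro (x | k) (y | l)
  · exact (hinl x).trans ((hinr _ _).trans (hinl y).symm)
  · exact (hinl x).trans (hinr _ _)
  · exact (hinr _ _).trans (hinl y).symm
  · exact hinr _ _

theorem isAcyclic : (graph pos).IsAcyclic := by
  refine isAcyclic_iff_forall_isBridge.mpr fun e he => ?_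
  rcases exists_eq_pendant_or_spine he with ⟨x, rfl⟩ | ⟨k, hk, rfl⟩
  · exact fun h => by simpa using eq_inl_iff_of_reachable h
  · exact fun h => by simpa [side] using side_iff_of_reachable h

theorem isTree [Nonempty X] : (graph pos).IsTree :=
  ⟨⟨preconnected⟩, isAcyclic⟩

theorem separates_pendant_iff {x a b c d : X} :
    Separates (graph pos) (pendant pos x) (.inl a) (.inl b) (.inl c) (.inl d) ↔
      SplitBy (· = x) a b c d := by
  rw [Separates, and_iff_right (by simp [pendant])]
  simp only [SplitBy, reachable_deleteEdges_pendant_iff]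

theorem separates_spine_iff {k : ℕ} {hk : k + 1 < m} {a b c d : X} :
    Separates (graph pos) (spine k hk) (.inl a) (.inl b) (.inl c) (.inl d) ↔
      SplitBy (fun y => (pos y : ℕ) ≤ k) a b c d := by
  rw [Separates, and_iff_right (by simp [spine])]
  simp only [SplitBy, reachable_deleteEdges_spine_iff]

variable (pos) in
/-- One side of the bipartition of the taxa induced by an edge of `graph pos`: a pendant edge, or
the spine edge from `k` to `k + 1`. -/
def IsCut (P : X → Prop) : Prop :=
  (∃ x, P = (· = x)) ∨ ∃ k, k + 1 < m ∧ P = fun y => (pos y : ℕ) ≤ k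

theorem exists_separates_iff {a b c d : X} :
    (∃ e, Separates (graph pos) e (.inl a) (.inl b) (.inl c) (.inl d)) ↔
      ∃ P, IsCut pos P ∧ SplitBy P a b c d := by
  constructor
  · rintro ⟨e, hsep⟩
    rcases exists_eq_pendant_or_spine hsep.1 with ⟨x, rfl⟩ | ⟨k, hk, rfl⟩
    · exact ⟨_, .inl ⟨x, rfl⟩, separates_pendant_iff.mp hsep⟩
    · exact ⟨_, .inr ⟨k, hk, rfl⟩, separates_spine_iff.mp hsep⟩
  · rintro ⟨P, ⟨x, rfl⟩ | ⟨k, hk, rfl⟩, hsplit⟩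
    exacts [⟨_, separates_pendant_iff.mpr hsplit⟩,
      ⟨_, separates_spine_iff (hk := hk) |>.mpr hsplit⟩]

theorem card_neighborSet_inl (x : X) : Nat.card ((graph pos).neighborSet (.inl x)) = 1 := by
  have : (graph pos).neighborSet (.inl x) = {.inr (pos x)} := by
    ext v
    exact adj_inl_iff
  rw [this, Nat.card_unique]

theorem exists_adj_inl_inl_iff {x y : X} :
    (∃ v, (graph pos).Adj (.inl x) v ∧ (graph pos).Adj (.inl y) v) ↔ pos x = pos y := by
  simp [adj_inl_iff]

theorem isCut_comp (σ : Equiv.Perm X) {P : X → Prop} (hP : IsCut pos P) :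
    IsCut (pos ∘ σ) (P ∘ σ) := by
  rcases hP with ⟨x, rfl⟩ | ⟨k, hk, rfl⟩
  · exact .inl ⟨σ.symm x, funext fun y => by simp [← Equiv.eq_symm_apply]⟩
  · exact .inr ⟨k, hk, rfl⟩

theorem exists_isCut_splitBy_perm_iff (σ : Equiv.Perm X) {a b c d : X} :
    (∃ P, IsCut pos P ∧ SplitBy P (σ a) (σ b) (σ c) (σ d)) ↔
      ∃ Q, IsCut (pos ∘ σ) Q ∧ SplitBy Q a b c d := by
  refine ⟨fun ⟨P, hP, h⟩ => ⟨P ∘ σ, isCut_comp σ hP, h⟩, fun ⟨Q, hQ, h⟩ => ⟨Q ∘ σ.symm, ?_, ?_⟩⟩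
  · simpa [Function.comp_assoc] using isCut_comp σ.symm hQ
  · simpa [SplitBy] using h

/-- Moving the taxon `b` off the cherry `{a, b}` at the end of the spine, and `c` onto it,
changes no cut as seen from a taxon set `Y` that misses one of `a, b, c`. -/
theorem exists_isCut_eqOn {pos pos' : X → Fin m} {a b c : X} {Y : Finset X} (hm : 2 < m)
    (hY : a ∉ Y ∨ b ∉ Y ∨ c ∉ Y)
    (hle : ∀ k, 1 ≤ k → ∀ y, ((pos y : ℕ) ≤ k ↔ (pos' y : ℕ) ≤ k))
    (h0 : ∀ y, (pos' y : ℕ) = 0 ↔ y = a ∨ y = c)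
    (h1 : ∀ y, (pos y : ℕ) ≤ 1 ↔ y = a ∨ y = b ∨ y = c)
    {P : X → Prop} (hP : IsCut pos' P) : ∃ Q, IsCut pos Q ∧ ∀ y ∈ Y, (P y ↔ Q y) := by
  rcases hP with ⟨x, rfl⟩ | ⟨k, hk, rfl⟩
  · exact ⟨_, .inl ⟨x, rfl⟩, fun _ _ => Iff.rfl⟩
  rcases Nat.eq_zero_or_pos k with rfl | hk1
  · simp only [Nat.le_zero, h0]
    rcases hY with ha | hb | hc
    · refine ⟨(· = c), .inl ⟨c, rfl⟩, fun y hy => or_iff_right ?_⟩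
      rintro rfl
      exact ha hy
    · refine ⟨fun y => (pos y : ℕ) ≤ 1, .inr ⟨1, hm, rfl⟩, fun y hy => ?_⟩
      have hyb : y ≠ b := by rintro rfl; exact hb hy
      simp only [h1, hyb, false_or]
    · refine ⟨(· = a), .inl ⟨a, rfl⟩, fun y hy => or_iff_left ?_⟩
      rintro rfl
      exact hc hy
  · exact ⟨_, .inr ⟨k, hk, rfl⟩, fun y _ => (hle k hk1 y).symm⟩

theorem exists_isCut_splitBy_iff {pos pos' : X → Fin m} {a b c : X} {Y : Finset X} (hm : 2 < m)
    (hY : a ∉ Y ∨ b ∉ Y ∨ c ∉ Y)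
    (hle : ∀ k, 1 ≤ k → ∀ y, ((pos y : ℕ) ≤ k ↔ (pos' y : ℕ) ≤ k))
    (h0 : ∀ y, (pos y : ℕ) = 0 ↔ y = a ∨ y = b) (h0' : ∀ y, (pos' y : ℕ) = 0 ↔ y = a ∨ y = c)
    (h1 : ∀ y, (pos y : ℕ) ≤ 1 ↔ y = a ∨ y = b ∨ y = c)
    {p q r s : X} (hp : p ∈ Y) (hq : q ∈ Y) (hr : r ∈ Y) (hs : s ∈ Y) :
    (∃ P, IsCut pos P ∧ SplitBy P p q r s) ↔ ∃ P, IsCut pos' P ∧ SplitBy P p q r s := by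
  have h1' : ∀ y, (pos' y : ℕ) ≤ 1 ↔ y = a ∨ y = c ∨ y = b := fun y => by
    rw [← hle 1 le_rfl, h1, or_comm (a := y = b)]
  have hle' : ∀ k, 1 ≤ k → ∀ y, ((pos' y : ℕ) ≤ k ↔ (pos y : ℕ) ≤ k) :=
    fun k hk y => (hle k hk y).symm
  exact ⟨exists_splitBy_of_forall_exists_eqOn
      (fun _ => exists_isCut_eqOn hm (hY.imp_right Or.symm) hle' h0 h1') hp hq hr hs,
    exists_splitBy_of_forall_exists_eqOn (fun _ => exists_isCut_eqOn hm hY hle h0' h1) hp hq hr hs⟩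

/-- With `0 - 1 = 0` in `ℕ`, the taxa `0, 1` hang at spine vertex `0`, the taxon `j` at `j - 1`,
and `k + 1, k + 2` at `k`. -/
def catPos (k : ℕ) (j : Fin (k + 3)) : Fin (k + 1) := ⟨min (j - 1) k, by omega⟩

theorem card_neighborSet_inr_catPos {k : ℕ} (hk : 1 ≤ k) (i : Fin (k + 1)) :
    Nat.card ((graph (catPos k)).neighborSet (.inr i)) = 3 := by
  rw [Nat.card_coe_set_eq, Set.ncard_eq_three]
  obtain ⟨i, hi⟩ := i
  rcases (by omega : i = 0 ∨ (0 < i ∧ i < k) ∨ i = k) with rfl | ⟨hi0, hik⟩ | hik <;> [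
    refine ⟨.inl ⟨0, by omega⟩, .inl ⟨1, by omega⟩, .inr ⟨1, by omega⟩,
      by simp, by simp, by simp, ?_⟩;
    refine ⟨.inl ⟨i + 1, by omega⟩, .inr ⟨i - 1, by omega⟩, .inr ⟨i + 1, by omega⟩,
      by simp, by simp, by simp, ?_⟩;
    refine ⟨.inl ⟨k + 1, by omega⟩, .inl ⟨k + 2, by omega⟩, .inr ⟨k - 1, by omega⟩,
      by simp, by simp, by simp, ?_⟩] <;>
  ext (y | j) <;>
  simp only [mem_neighborSet, adj_inr_inl, adj_inr_inr, Set.mem_insert_iff, Set.mem_singleton_iff,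
    Sum.inl.injEq, Sum.inr.injEq, reduceCtorEq, or_false, false_or, Fin.ext_iff, catPos] <;>
  omega

def catTree (k : ℕ) (hk : 1 ≤ k) : PhyloTree (Fin (k + 3)) where
  V := Fin (k + 3) ⊕ Fin (k + 1)
  finV := inferInstance
  g := graph (catPos k)
  tree := isTree
  deg := by
    rintro (x | i)
    exacts [.inl (card_neighborSet_inl x), .inr (card_neighborSet_inr_catPos hk i)]
  lab := .inl
  inj := Sum.inl_injective
  leaf_iff := by
    rintro (x | i)
    · simp only [card_neighborSet_inl, true_iff]
      exact ⟨x, rfl⟩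
    · simp [card_neighborSet_inr_catPos hk]

def swap12 (k : ℕ) : Equiv.Perm (Fin (k + 3)) := Equiv.swap ⟨1, by omega⟩ ⟨2, by omega⟩

variable {k : ℕ}

theorem catTree_displays_iff (hk : 1 ≤ k) {a b c d : Fin (k + 3)} :
    (catTree k hk).Displays a b c d ↔ ∃ P, IsCut (catPos k) P ∧ SplitBy P a b c d :=
  exists_separates_iff

theorem catPos_swap12 (hk : 1 ≤ k) (y : Fin (k + 3)) :
    ((catPos k ∘ swap12 k) y : ℕ) =
      if (y : ℕ) = 1 then 1 else if (y : ℕ) = 2 then 0 else (catPos k y : ℕ) := by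
  simp only [Function.comp_apply, swap12, Equiv.swap_apply_def, Fin.ext_iff]
  split_ifs <;> simp only [catPos, Fin.val_mk] <;> omega

theorem not_iso_catTree_relabel (hk : 1 ≤ k) :
    ¬ (catTree k hk).Iso ((catTree k hk).relabel (swap12 k)) := by
  intro h
  have hcherry : (catTree k hk).IsCherry ⟨0, by omega⟩ ⟨1, by omega⟩ :=
    exists_adj_inl_inl_iff.mpr (by simp [catPos])
  have := congrArg Fin.val (exists_adj_inl_inl_iff.mp (h.isCherry hcherry))
  simp [catPos, swap12, Equiv.swap_apply_def] at this
  omega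

theorem agreeOn_catTree_relabel (hk : 2 ≤ k) {Y : Finset (Fin (k + 3))}
    (hY : ∃ t ∉ Y, (t : ℕ) < 3) :
    AgreeOn (catTree k (one_le_two.trans hk))
      ((catTree k (one_le_two.trans hk)).relabel (swap12 k)) Y := by
  have hY' : ⟨0, by omega⟩ ∉ Y ∨ ⟨1, by omega⟩ ∉ Y ∨ ⟨2, by omega⟩ ∉ Y := by
    obtain ⟨⟨t, ht⟩, htY, ht3⟩ := hY
    interval_cases t
    exacts [.inl htY, .inr (.inl htY), .inr (.inr htY)]
  intro a b c d ha hb hc hd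
  rw [PhyloTree.relabel_displays, catTree_displays_iff, catTree_displays_iff,
    exists_isCut_splitBy_perm_iff]
  refine exists_isCut_splitBy_iff (by omega) hY' ?_ ?_ ?_ ?_ ha hb hc hd <;>
    intros <;>
    simp only [catPos_swap12 (one_le_two.trans hk), catPos, Fin.ext_iff] <;> lia

end Caterpillar

/-- The minimal number `k(n)` such that every collection of at least `k` quartets is
phylogenetically decisive is greater than `C(n,4) − (n − 3)`: there is a collection of
quartets of size `C(n,4) − (n − 3)` that is not decisive. -/
theorem stmt_15 (n : ℕ) (hn : 5 ≤ n) :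
    ∃ S' : Finset (Finset (Fin n)), (∀ Y ∈ S', Y.card = 4) ∧
      S'.card = n.choose 4 - (n - 3) ∧ ¬ Decisive S' := by
  obtain ⟨k, rfl⟩ : ∃ k, n = k + 3 := ⟨n - 3, by omega⟩
  let abc : Finset (Fin (k + 3)) := {t | (t : ℕ) < 3}
  have habc : #abc = 3 := by simp [abc, Fin.card_filter_val_lt]
  refine ⟨(univ.powersetCard 4).filter (¬ abc ⊆ ·),
    fun Y hY => (mem_powersetCard.mp (mem_filter.mp hY).1).2, ?_, fun hdec => ?_⟩
  · have hsplit := card_filter_add_card_filter_not (s := univ.powersetCard 4) (p := (abc ⊆ ·))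
    rw [card_filter_powersetCard_subset abc univ 4 (subset_univ _) (by omega), card_powersetCard,
      card_univ, Fintype.card_fin, habc] at hsplit
    norm_num at hsplit
    omega
  have hk : 2 ≤ k := by omega
  refine Caterpillar.not_iso_catTree_relabel (one_le_two.trans hk)
    (hdec _ _ fun Y hY => Caterpillar.agreeOn_catTree_relabel hk ?_)
  obtain ⟨t, ht, htY⟩ := not_subset.mp (mem_filter.mp hY).2
  exact ⟨t, htY, by simpa [abc] using ht⟩
end

section
/- For three distinct caterpillar trees T_1, T_2, T_3 on n ≥ 5 leaves, differing only in the arrangement of three taxa a, b, c attached at the internal vertices incident to the first interior edge, and for any 4-element subset Y of the leaf set not containing all of {a, b, c}, the restricted trees agree: T_1|Y = T_2|Y = T_3|Y. -/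
open SimpleGraph Finset

/-- `T'` is obtained from `T` by relabeling taxa along the permutation `π`. -/
def RelabelOf {X : Type} (T T' : PhyloTree X) (π : Equiv.Perm X) : Prop :=
  ∃ f : T.V ≃ T'.V, (∀ u v, T.g.Adj u v ↔ T'.g.Adj (f u) (f v)) ∧
    ∀ x, f (T.lab x) = T'.lab (π x)

/-- A caterpillar: the internal vertices form a path, i.e. every internal vertex has at
most two internal neighbors. -/
def IsCaterpillar {X : Type} (T : PhyloTree X) : Prop :=
  ∀ v : T.V, Nat.card (T.g.neighborSet v) = 3 →
    Nat.card {w : T.V // T.g.Adj v w ∧ Nat.card (T.g.neighborSet w) = 3} ≤ 2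

namespace PF
variable {V : Type} {G : SimpleGraph V}

lemma reach_del_of_adj {e : Sym2 V} {x y : V} (h : G.Adj x y) (hne : s(x,y) ≠ e) :
    (G.deleteEdges {e}).Reachable x y := by
  refine Adj.reachable ?_
  rw [SimpleGraph.deleteEdges_adj]
  exact ⟨h, by simpa using hne⟩

lemma reach_del_of_walk {e : Sym2 V} {x y : V} (p : G.Walk x y) (he : e ∉ p.edges) :
    (G.deleteEdges {e}).Reachable x y := by
  refine ⟨p.toDeleteEdges _ ?_⟩
  intro f hf hfs
  rw [Set.mem_singleton_iff] at hfs
  exact he (hfs ▸ hf)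

lemma not_reach_del {e : Sym2 V} {x y : V} (h : ∀ p : G.Walk x y, p.IsPath → e ∈ p.edges) :
    ¬ (G.deleteEdges {e}).Reachable x y := by
  classical
  rintro ⟨w⟩
  have hsub : ∀ f ∈ w.edges, f ∈ G.edgeSet := by
    intro f hf
    have := w.edges_subset_edgeSet hf
    rw [SimpleGraph.edgeSet_deleteEdges] at this
    exact this.1
  have hnot : e ∉ w.edges := by
    intro hmem
    have := w.edges_subset_edgeSet hmem
    rw [SimpleGraph.edgeSet_deleteEdges] at this
    exact this.2 rfl
  set w' := w.transfer G hsub with hw'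
  have hb := h w'.bypass w'.bypass_isPath
  have : e ∈ w'.edges := w'.edges_bypass_subset hb
  rw [hw', Walk.edges_transfer] at this
  exact hnot this

lemma thru {x y t : V} (P : G.Walk x y) (hP : P.IsPath) (ht : t ∈ P.support)
    (hx : t ≠ x) (hy : t ≠ y) :
    ∃ n₁ n₂, n₁ ≠ n₂ ∧ s(t,n₁) ∈ P.edges ∧ s(t,n₂) ∈ P.edges := by
  classical
  set P₁ := P.takeUntil t ht with hP₁
  set P₂ := P.dropUntil t ht with hP₂
  have hspec : P₁.append P₂ = P := P.take_spec ht
  -- decompose P₂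
  have h2nil : ¬ P₂.Nil := Walk.not_nil_of_ne hy
  obtain ⟨n₂, hadj₂, q₂, hq₂⟩ := Walk.not_nil_iff.mp h2nil
  -- decompose P₁.reverse
  have h1nil : ¬ P₁.reverse.Nil := Walk.not_nil_of_ne hx
  obtain ⟨n₁, hadj₁, q₁, hq₁⟩ := Walk.not_nil_iff.mp h1nil
  have he₁ : s(t,n₁) ∈ P₁.edges := by
    have : s(t,n₁) ∈ P₁.reverse.edges := by rw [hq₁]; simp
    rwa [Walk.edges_reverse, List.mem_reverse] at this
  have he₂ : s(t,n₂) ∈ P₂.edges := by rw [hq₂]; simp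
  have hn₁s : n₁ ∈ P₁.support := by
    have : n₁ ∈ P₁.reverse.support := by rw [hq₁]; simp
    rwa [Walk.support_reverse, List.mem_reverse] at this
  have hn₂s : n₂ ∈ P₂.support.tail := by rw [hq₂]; simp
  have hnodup : (P₁.support ++ P₂.support.tail).Nodup := by
    rw [← Walk.support_append, hspec]; exact hP.support_nodup
  have hdisj := List.disjoint_of_nodup_append hnodup
  refine ⟨n₁, n₂, ?_, P.edges_takeUntil_subset ht he₁, P.edges_dropUntil_subset ht he₂⟩
  intro hEq
  exact hdisj hn₁s (hEq ▸ hn₂s)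

lemma adj_of_mem_edges' {x y t u : V} (P : G.Walk x y) (h : s(t,u) ∈ P.edges) : G.Adj t u :=
  P.edges_subset_edgeSet h

lemma leaf_internal {x y t : V} (P : G.Walk x y) (hP : P.IsPath)
    (hdeg : Nat.card (G.neighborSet t) = 1) (ht : t ∈ P.support) : t = x ∨ t = y := by
  by_contra hcon
  push_neg at hcon
  obtain ⟨n₁, n₂, hne, he₁, he₂⟩ := thru P hP ht hcon.1 hcon.2
  rw [Nat.card_coe_set_eq, Set.ncard_eq_one] at hdeg
  obtain ⟨m, hm⟩ := hdeg
  have h₁ : n₁ ∈ G.neighborSet t := adj_of_mem_edges' P he₁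
  have h₂ : n₂ ∈ G.neighborSet t := adj_of_mem_edges' P he₂
  rw [hm, Set.mem_singleton_iff] at h₁ h₂
  exact hne (h₁.trans h₂.symm)


lemma ncard_one_of_singleton {ℓ m : V} (h : G.neighborSet ℓ = {m}) :
    Nat.card (G.neighborSet ℓ) = 1 := by
  rw [Nat.card_coe_set_eq, h, Set.ncard_singleton]

lemma adj_of_nbhd {ℓ m : V} (h : G.neighborSet ℓ = {m}) : G.Adj ℓ m := by
  rw [← SimpleGraph.mem_neighborSet, h]; rfl

lemma leaf_isolated {ℓ m : V} (h1 : G.neighborSet ℓ = {m}) {t : V} (ht : t ≠ ℓ) :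
    ¬ (G.deleteEdges {s(ℓ,m)}).Reachable ℓ t := by
  rintro ⟨w⟩
  cases w with
  | nil => exact ht rfl
  | cons h q =>
    rw [SimpleGraph.deleteEdges_adj] at h
    obtain ⟨hadj, hne⟩ := h
    have : _ ∈ G.neighborSet ℓ := hadj
    rw [h1, Set.mem_singleton_iff] at this
    subst this
    exact hne rfl


lemma leaf_del_reach (hconn : G.Connected) {ℓ m : V} (hm : G.neighborSet ℓ = {m})
    {t t' : V} (ht : t ≠ ℓ) (ht' : t' ≠ ℓ) :
    (G.deleteEdges {s(ℓ,m)}).Reachable t t' := by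
  classical
  obtain ⟨w⟩ := hconn.preconnected t t'
  refine reach_del_of_walk w.bypass ?_
  intro hmem
  have hsupp : ℓ ∈ w.bypass.support := w.bypass.fst_mem_support_of_mem_edges hmem
  rcases leaf_internal w.bypass w.bypass_isPath (ncard_one_of_singleton hm) hsupp with h | h
  · exact ht h.symm
  · exact ht' h.symm

lemma path_from_leaf {ℓ m t : V} (hm : G.neighborSet ℓ = {m}) (P : G.Walk ℓ t) (hne : ℓ ≠ t) :
    s(ℓ,m) ∈ P.edges ∧ m ∈ P.support := by
  obtain ⟨n, hadj, q, hq⟩ := (Walk.not_nil_iff (p := P)).mp (Walk.not_nil_of_ne hne)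
  have hn : n = m := by
    have : n ∈ G.neighborSet ℓ := hadj
    rwa [hm, Set.mem_singleton_iff] at this
  have he : s(ℓ,m) ∈ P.edges := by rw [hq]; simp [hn]
  exact ⟨he, P.snd_mem_support_of_mem_edges he⟩

lemma leaf_classify (hconn : G.Connected) {ℓ n A B C D : V} (h1 : G.neighborSet ℓ = {n})
    (hS : _root_.Separates G s(ℓ,n) A B C D) :
    (A = ℓ ∧ B = ℓ ∧ C ≠ ℓ ∧ D ≠ ℓ) ∨ (C = ℓ ∧ D = ℓ ∧ A ≠ ℓ ∧ B ≠ ℓ) := by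
  obtain ⟨hmem, hAB, hCD, hAC⟩ := hS
  by_cases hA : A = ℓ
  · have hB : B = ℓ := by
      by_contra hB
      exact leaf_isolated h1 hB (hA ▸ hAB)
    have hC : C ≠ ℓ := by
      intro hC
      exact hAC (by rw [hA, hC])
    have hD : D ≠ ℓ := by
      intro hD
      exact leaf_isolated h1 hC (hD ▸ hCD.symm)
    exact Or.inl ⟨hA, hB, hC, hD⟩
  · have hC : C = ℓ := by
      by_contra hC
      exact hAC (leaf_del_reach hconn h1 hA hC)
    have hD : D = ℓ := by
      by_contra hD
      exact leaf_isolated h1 hD (hC ▸ hCD)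
    have hB : B ≠ ℓ := by
      intro hB
      exact leaf_isolated h1 hA (hB ▸ hAB.symm)
    exact Or.inr ⟨hC, hD, hA, hB⟩

lemma leaf_display (hconn : G.Connected) {ℓ n A B : V} (h1 : G.neighborSet ℓ = {n})
    (hA : A ≠ ℓ) (hB : B ≠ ℓ) :
    _root_.Separates G s(ℓ,n) ℓ ℓ A B ∧ _root_.Separates G s(ℓ,n) A B ℓ ℓ := by
  have hmem : s(ℓ,n) ∈ G.edgeSet := adj_of_nbhd h1
  have hAB : (G.deleteEdges {s(ℓ,n)}).Reachable A B := leaf_del_reach hconn h1 hA hB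
  exact ⟨⟨hmem, Reachable.rfl, hAB, fun h => leaf_isolated h1 hA h⟩,
    ⟨hmem, hAB, Reachable.rfl, fun h => leaf_isolated h1 hA h.symm⟩⟩


/-- `m'` is a cherry vertex with leaf-neighbors `lx, ly` and third neighbor `m`.
Any two vertices away from the cherry stay connected after deleting `s(m',m)`. -/
lemma cherry_reach (hconn : G.Connected) {m m' lx ly : V}
    (hm' : G.neighborSet m' = {m, lx, ly})
    (h1x : G.neighborSet lx = {m'}) (h1y : G.neighborSet ly = {m'})
    {t t' : V} (htx : t ≠ lx) (hty : t ≠ ly) (ht'x : t' ≠ lx) (ht'y : t' ≠ ly)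
    (htm' : t ≠ m') (ht'm' : t' ≠ m') :
    (G.deleteEdges {s(m',m)}).Reachable t t' := by
  classical
  obtain ⟨w⟩ := hconn.preconnected t t'
  refine reach_del_of_walk w.bypass ?_
  intro hmem
  have hsupp : m' ∈ w.bypass.support := w.bypass.fst_mem_support_of_mem_edges hmem
  obtain ⟨n₁, n₂, hne, he₁, he₂⟩ :=
    thru w.bypass w.bypass_isPath hsupp (Ne.symm htm') (Ne.symm ht'm')
  have hn₁ : n₁ ∈ G.neighborSet m' := adj_of_mem_edges' w.bypass he₁
  have hn₂ : n₂ ∈ G.neighborSet m' := adj_of_mem_edges' w.bypass he₂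
  rw [hm'] at hn₁ hn₂
  -- one of n₁ n₂ is lx or ly
  have : ∃ ℓ, (ℓ = lx ∨ ℓ = ly) ∧ s(m',ℓ) ∈ w.bypass.edges := by
    rcases hn₁ with h | h | h
    · rcases hn₂ with h2 | h2 | h2
      · exact absurd (h.trans h2.symm) hne
      · exact ⟨n₂, Or.inl h2, he₂⟩
      · exact ⟨n₂, Or.inr h2, he₂⟩
    · exact ⟨n₁, Or.inl h, he₁⟩
    · exact ⟨n₁, Or.inr h, he₁⟩
  obtain ⟨ℓ, hℓ, heℓ⟩ := this
  have hsuppℓ : ℓ ∈ w.bypass.support := w.bypass.snd_mem_support_of_mem_edges heℓ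
  have hdeg : Nat.card (G.neighborSet ℓ) = 1 := by
    rcases hℓ with rfl | rfl
    · exact ncard_one_of_singleton h1x
    · exact ncard_one_of_singleton h1y
  rcases leaf_internal w.bypass w.bypass_isPath hdeg hsuppℓ with h | h <;>
    rcases hℓ with rfl | rfl
  · exact htx h.symm
  · exact hty h.symm
  · exact ht'x h.symm
  · exact ht'y h.symm

lemma cherry_not_reach (hconn : G.Connected) {m m' lx ly : V}
    (hm' : G.neighborSet m' = {m, lx, ly})
    (h1x : G.neighborSet lx = {m'}) (h1y : G.neighborSet ly = {m'})
    (hxy : lx ≠ ly)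
    {ℓ0 t' : V} (h0 : ℓ0 = lx ∨ ℓ0 = ly)
    (ht'x : t' ≠ lx) (ht'y : t' ≠ ly) (ht'm' : t' ≠ m') :
    ¬ (G.deleteEdges {s(m',m)}).Reachable ℓ0 t' := by
  refine not_reach_del ?_
  intro P hP
  have h10 : G.neighborSet ℓ0 = {m'} := by rcases h0 with rfl | rfl <;> assumption
  have hℓ0t : ℓ0 ≠ t' := by rcases h0 with rfl | rfl <;> [exact Ne.symm ht'x; exact Ne.symm ht'y]
  obtain ⟨hfe, hm's⟩ := path_from_leaf h10 P hℓ0t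
  have hm'0 : m' ≠ ℓ0 := by
    have hadj : G.Adj ℓ0 m' := by rw [← SimpleGraph.mem_neighborSet, h10]; rfl
    exact hadj.ne'
  obtain ⟨n₁, n₂, hne, he₁, he₂⟩ := thru P hP hm's hm'0 (Ne.symm ht'm')
  have hn₁ : n₁ ∈ G.neighborSet m' := adj_of_mem_edges' P he₁
  have hn₂ : n₂ ∈ G.neighborSet m' := adj_of_mem_edges' P he₂
  rw [hm'] at hn₁ hn₂
  simp only [Set.mem_insert_iff, Set.mem_singleton_iff] at hn₁ hn₂
  have intern : ∀ ℓ, G.neighborSet ℓ = {m'} → ℓ ≠ ℓ0 → ℓ ≠ t' → ℓ ∈ P.support → False := by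
    intro ℓ hℓ1 hℓ0 hℓt hℓs
    rcases leaf_internal P hP (ncard_one_of_singleton hℓ1) hℓs with h | h
    · exact hℓ0 h
    · exact hℓt h
  have key : ∀ n, n = lx ∨ n = ly → s(m', n) ∈ P.edges → n ≠ ℓ0 → False := by
    intro n hn he hn0
    refine intern n ?_ hn0 ?_ (P.snd_mem_support_of_mem_edges he)
    · rcases hn with rfl | rfl <;> assumption
    · rcases hn with rfl | rfl
      · exact Ne.symm ht'x
      · exact Ne.symm ht'y
  rcases hn₁ with h1 | h1 | h1
  · exact h1 ▸ he₁
  · rcases hn₂ with h2 | h2 | h2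
    · exact h2 ▸ he₂
    · exact absurd (h1.trans h2.symm) hne
    · exfalso
      by_cases h0' : n₁ = ℓ0
      · refine key n₂ (Or.inr h2) he₂ (fun h => hxy ?_)
        rw [h1] at h0'; rw [h2] at h; exact h0'.trans h.symm
      · exact key n₁ (Or.inl h1) he₁ h0'
  · rcases hn₂ with h2 | h2 | h2
    · exact h2 ▸ he₂
    · exfalso
      by_cases h0' : n₁ = ℓ0
      · refine key n₂ (Or.inl h2) he₂ (fun h => hxy ?_)
        rw [h1] at h0'; rw [h2] at h; exact h.trans h0'.symm
      · exact key n₁ (Or.inr h1) he₁ h0'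
    · exact absurd (h1.trans h2.symm) hne


lemma mem3 {A B C : V} {t : V} (h : G.neighborSet t = {A, B, C})
    {z : V} (he : z ∈ G.neighborSet t) : z = A ∨ z = B ∨ z = C := by
  rw [h] at he
  simpa using he

lemma far_reach (hconn : G.Connected) {m m' lx ly lz w : V}
    (hm : G.neighborSet m = {m', lz, w}) (hm' : G.neighborSet m' = {m, lx, ly})
    (h1x : G.neighborSet lx = {m'}) (h1y : G.neighborSet ly = {m'})
    (h1z : G.neighborSet lz = {m})
    {t t' : V}
    (ht : t ≠ lx ∧ t ≠ ly ∧ t ≠ lz ∧ t ≠ m ∧ t ≠ m')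
    (ht' : t' ≠ lx ∧ t' ≠ ly ∧ t' ≠ lz ∧ t' ≠ m ∧ t' ≠ m') :
    (G.deleteEdges {s(m,w)}).Reachable t t' := by
  classical
  obtain ⟨w0⟩ := hconn.preconnected t t'
  set P := w0.bypass with hPdef
  have hP : P.IsPath := w0.bypass_isPath
  refine reach_del_of_walk P ?_
  intro hmem
  have intern : ∀ ℓ n, G.neighborSet ℓ = {n} → ℓ ≠ t → ℓ ≠ t' → ℓ ∈ P.support → False := by
    intro ℓ n hℓ1 h1 h2 hs
    rcases leaf_internal P hP (ncard_one_of_singleton hℓ1) hs with h | h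
    · exact h1 h
    · exact h2 h
  have hms : m ∈ P.support := P.fst_mem_support_of_mem_edges hmem
  obtain ⟨n₁, n₂, hne, he₁, he₂⟩ := thru P hP hms (Ne.symm ht.2.2.2.1) (Ne.symm ht'.2.2.2.1)
  have hn₁ := mem3 hm (adj_of_mem_edges' P he₁)
  have hn₂ := mem3 hm (adj_of_mem_edges' P he₂)
  have hlz : ∀ n, n = lz → s(m, n) ∈ P.edges → False := by
    intro n hn he
    rw [hn] at he
    exact intern lz m h1z (Ne.symm ht.2.2.1) (Ne.symm ht'.2.2.1) (P.snd_mem_support_of_mem_edges he)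
  have hm'edge : s(m, m') ∈ P.edges := by
    rcases hn₁ with h1 | h1 | h1
    · exact h1 ▸ he₁
    · exact absurd (hlz n₁ h1 he₁) not_false
    · rcases hn₂ with h2 | h2 | h2
      · exact h2 ▸ he₂
      · exact absurd (hlz n₂ h2 he₂) not_false
      · exact absurd (h1.trans h2.symm) hne
  have hm's : m' ∈ P.support := P.snd_mem_support_of_mem_edges hm'edge
  obtain ⟨k₁, k₂, hkne, hk₁, hk₂⟩ := thru P hP hm's (Ne.symm ht.2.2.2.2) (Ne.symm ht'.2.2.2.2)
  have hk₁' := mem3 hm' (adj_of_mem_edges' P hk₁)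
  have hk₂' := mem3 hm' (adj_of_mem_edges' P hk₂)
  have hcherry : ∀ k, (k = lx ∨ k = ly) → s(m', k) ∈ P.edges → False := by
    intro k hk he
    have hsupp := P.snd_mem_support_of_mem_edges he
    rcases hk with h | h <;> rw [h] at hsupp
    · exact intern lx m' h1x (Ne.symm ht.1) (Ne.symm ht'.1) hsupp
    · exact intern ly m' h1y (Ne.symm ht.2.1) (Ne.symm ht'.2.1) hsupp
  rcases hk₁' with h1 | h1 | h1
  · rcases hk₂' with h2 | h2 | h2
    · exact hkne (h1.trans h2.symm)
    · exact hcherry k₂ (Or.inl h2) hk₂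
    · exact hcherry k₂ (Or.inr h2) hk₂
  · exact hcherry k₁ (Or.inl h1) hk₁
  · exact hcherry k₁ (Or.inr h1) hk₁

lemma far_not_reach {m m' lx ly lz w : V}
    (hm : G.neighborSet m = {m', lz, w}) (hm' : G.neighborSet m' = {m, lx, ly})
    (h1x : G.neighborSet lx = {m'}) (h1y : G.neighborSet ly = {m'})
    (h1z : G.neighborSet lz = {m})
    (hd : lx ≠ ly ∧ lx ≠ lz ∧ ly ≠ lz ∧ lx ≠ m ∧ lx ≠ m' ∧ ly ≠ m ∧ ly ≠ m' ∧ lz ≠ m ∧ lz ≠ m' ∧ m ≠ m')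
    {ℓ0 t' : V} (h0 : ℓ0 = lx ∨ ℓ0 = ly ∨ ℓ0 = lz)
    (ht' : t' ≠ lx ∧ t' ≠ ly ∧ t' ≠ lz ∧ t' ≠ m ∧ t' ≠ m') :
    ¬ (G.deleteEdges {s(m,w)}).Reachable ℓ0 t' := by
  refine not_reach_del ?_
  intro P hP
  have hℓ0t' : ℓ0 ≠ t' := by
    rcases h0 with h | h | h <;> rw [h]
    · exact Ne.symm ht'.1
    · exact Ne.symm ht'.2.1
    · exact Ne.symm ht'.2.2.1
  have hℓ0m : ℓ0 ≠ m := by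
    rcases h0 with h | h | h <;> rw [h]
    · exact hd.2.2.2.1
    · exact hd.2.2.2.2.2.1
    · exact hd.2.2.2.2.2.2.2.1
  have hℓ0m' : ℓ0 ≠ m' := by
    rcases h0 with h | h | h <;> rw [h]
    · exact hd.2.2.2.2.1
    · exact hd.2.2.2.2.2.2.1
    · exact hd.2.2.2.2.2.2.2.2.1
  have intern : ∀ ℓ n, G.neighborSet ℓ = {n} → ℓ ≠ ℓ0 → ℓ ≠ t' → ℓ ∈ P.support → False := by
    intro ℓ n hℓ1 h1 h2 hs
    rcases leaf_internal P hP (ncard_one_of_singleton hℓ1) hs with h | h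
    · exact h1 h
    · exact h2 h
  have hcherryK : ∀ k, (k = lx ∨ k = ly) → k ≠ ℓ0 → s(m',k) ∈ P.edges → False := by
    intro k hk hk0 he
    have hs := P.snd_mem_support_of_mem_edges he
    have h1 : G.neighborSet k = {m'} := by rcases hk with h | h <;> rw [h] <;> assumption
    have hkt' : k ≠ t' := by
      rcases hk with h | h <;> rw [h]
      · exact Ne.symm ht'.1
      · exact Ne.symm ht'.2.1
    exact intern k m' h1 hk0 hkt' hs
  have atM' : m' ∈ P.support → m ∈ P.support := by
    intro hm's
    obtain ⟨k₁, k₂, hkne, hk₁, hk₂⟩ := thru P hP hm's (Ne.symm hℓ0m') (Ne.symm ht'.2.2.2.2)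
    have hk₁' := mem3 hm' (adj_of_mem_edges' P hk₁)
    have hk₂' := mem3 hm' (adj_of_mem_edges' P hk₂)
    have hpair : ∀ a b, a = lx ∨ a = ly → b = lx ∨ b = ly → a ≠ b → m ∈ P.support →
        m ∈ P.support := fun _ _ _ _ _ h => h
    have hcase : ∀ a b, s(m',a) ∈ P.edges → s(m',b) ∈ P.edges → a ≠ b →
        (a = lx ∨ a = ly) → (b = lx ∨ b = ly) → False := by
      intro a b hea heb hab ha hb
      by_cases hk0 : a = ℓ0
      · exact hcherryK b hb (fun h' => hab (hk0.trans h'.symm)) heb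
      · exact hcherryK a ha hk0 hea
    rcases hk₁' with h1 | h1 | h1
    · rw [h1] at hk₁; exact P.snd_mem_support_of_mem_edges hk₁
    · rcases hk₂' with h2 | h2 | h2
      · rw [h2] at hk₂; exact P.snd_mem_support_of_mem_edges hk₂
      · exact absurd (hcase k₁ k₂ hk₁ hk₂ hkne (Or.inl h1) (Or.inl h2)) not_false
      · exact absurd (hcase k₁ k₂ hk₁ hk₂ hkne (Or.inl h1) (Or.inr h2)) not_false
    · rcases hk₂' with h2 | h2 | h2
      · rw [h2] at hk₂; exact P.snd_mem_support_of_mem_edges hk₂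
      · exact absurd (hcase k₁ k₂ hk₁ hk₂ hkne (Or.inr h1) (Or.inl h2)) not_false
      · exact absurd (hcase k₁ k₂ hk₁ hk₂ hkne (Or.inr h1) (Or.inr h2)) not_false
  have hms : m ∈ P.support := by
    rcases h0 with h | h | h
    · refine atM' ?_
      have h10 : G.neighborSet ℓ0 = {m'} := by rw [h]; exact h1x
      exact (path_from_leaf h10 P hℓ0t').2
    · refine atM' ?_
      have h10 : G.neighborSet ℓ0 = {m'} := by rw [h]; exact h1y
      exact (path_from_leaf h10 P hℓ0t').2
    · have h10 : G.neighborSet ℓ0 = {m} := by rw [h]; exact h1z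
      exact (path_from_leaf h10 P hℓ0t').2
  obtain ⟨n₁, n₂, hne, he₁, he₂⟩ := thru P hP hms (Ne.symm hℓ0m) (Ne.symm ht'.2.2.2.1)
  have hn₁ := mem3 hm (adj_of_mem_edges' P he₁)
  have hn₂ := mem3 hm (adj_of_mem_edges' P he₂)
  have hW : ∀ n, n = w → s(m,n) ∈ P.edges → s(m,w) ∈ P.edges := fun n hn he => hn ▸ he
  have hdone : ∀ n n', n = m' → n' = lz → s(m,n) ∈ P.edges → s(m,n') ∈ P.edges →
      s(m,w) ∈ P.edges := by
    intro n n' hn hn' he he'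
    rw [hn] at he; rw [hn'] at he'
    exfalso
    have hlzs : lz ∈ P.support := P.snd_mem_support_of_mem_edges he'
    by_cases hz0 : lz = ℓ0
    · have hm's : m' ∈ P.support := P.snd_mem_support_of_mem_edges he
      obtain ⟨k₁, k₂, hkne, hk₁, hk₂⟩ := thru P hP hm's (Ne.symm hℓ0m') (Ne.symm ht'.2.2.2.2)
      have hk₁' := mem3 hm' (adj_of_mem_edges' P hk₁)
      have hk₂' := mem3 hm' (adj_of_mem_edges' P hk₂)
      have hcnot : ∀ k, (k = lx ∨ k = ly) → k ≠ ℓ0 := by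
        intro k hk
        rw [← hz0]
        rcases hk with h | h <;> rw [h]
        · exact hd.2.1
        · exact hd.2.2.1
      rcases hk₁' with h1 | h1 | h1
      · rcases hk₂' with h2 | h2 | h2
        · exact hkne (h1.trans h2.symm)
        · exact hcherryK k₂ (Or.inl h2) (hcnot k₂ (Or.inl h2)) hk₂
        · exact hcherryK k₂ (Or.inr h2) (hcnot k₂ (Or.inr h2)) hk₂
      · exact hcherryK k₁ (Or.inl h1) (hcnot k₁ (Or.inl h1)) hk₁
      · exact hcherryK k₁ (Or.inr h1) (hcnot k₁ (Or.inr h1)) hk₁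
    · exact intern lz m h1z hz0 (Ne.symm ht'.2.2.1) hlzs
  rcases hn₁ with h1 | h1 | h1
  · rcases hn₂ with h2 | h2 | h2
    · exact absurd (h1.trans h2.symm) hne
    · exact hdone n₁ n₂ h1 h2 he₁ he₂
    · exact hW n₂ h2 he₂
  · rcases hn₂ with h2 | h2 | h2
    · exact hdone n₂ n₁ h2 h1 he₂ he₁
    · exact absurd (h1.trans h2.symm) hne
    · exact hW n₂ h2 he₂
  · exact hW n₁ h1 he₁



variable {V : Type} {G : SimpleGraph V}

lemma ncard3 {u : V} (h : Nat.card (G.neighborSet u) = 3) : (G.neighborSet u).ncard = 3 := by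
  rwa [Nat.card_coe_set_eq] at h

lemma nbhd_finite {u : V} (h : Nat.card (G.neighborSet u) = 3) : (G.neighborSet u).Finite := by
  have := ncard3 h
  rw [Set.ncard_eq_three] at this
  obtain ⟨a, b, c, -, -, -, hs⟩ := this
  rw [hs]
  exact (Set.finite_singleton c).insert b |>.insert a

lemma config_helper {u v la lb lc : V} (huv : G.Adj u v)
    (h3u : Nat.card (G.neighborSet u) = 3) (h3v : Nat.card (G.neighborSet v) = 3)
    (h1a : G.neighborSet la = {u}) (h1b : G.neighborSet lb = {u}) (h1c : G.neighborSet lc = {v})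
    (hab : la ≠ lb) :
    G.neighborSet u = {v, la, lb} ∧
      ∃ w, G.neighborSet v = {u, lc, w} ∧ w ∉ ({u, v, la, lb, lc} : Set V) := by
  have hadj_la : G.Adj u la := ((G.mem_neighborSet la u).mp (by rw [h1a]; rfl)).symm
  have hadj_lb : G.Adj u lb := ((G.mem_neighborSet lb u).mp (by rw [h1b]; rfl)).symm
  have hadj_lc : G.Adj v lc := ((G.mem_neighborSet lc v).mp (by rw [h1c]; rfl)).symm
  have hlav : la ≠ v := by
    rintro rfl
    rw [h1a] at h3v
    simp [Nat.card_coe_set_eq] at h3v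
  have hlbv : lb ≠ v := by
    rintro rfl
    rw [h1b] at h3v
    simp [Nat.card_coe_set_eq] at h3v
  have hlcu : lc ≠ u := by
    rintro rfl
    rw [h1c] at h3u
    simp [Nat.card_coe_set_eq] at h3u
  have hsubu : ({v, la, lb} : Set V) ⊆ G.neighborSet u := by
    intro z hz
    simp only [Set.mem_insert_iff, Set.mem_singleton_iff] at hz
    rcases hz with h | h | h <;> rw [h]
    · exact huv
    · exact hadj_la
    · exact hadj_lb
  have hcard : ({v, la, lb} : Set V).ncard = 3 :=
    Set.ncard_eq_three.mpr ⟨v, la, lb, Ne.symm hlav, Ne.symm hlbv, hab, rfl⟩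
  have hu : ({v, la, lb} : Set V) = G.neighborSet u := by
    refine Set.eq_of_subset_of_ncard_le hsubu ?_ (nbhd_finite h3u)
    rw [hcard, ncard3 h3u]
  refine ⟨hu.symm, ?_⟩
  -- find w
  have hulc : u ≠ lc := Ne.symm hlcu
  have hsubv : ({u, lc} : Set V) ⊆ G.neighborSet v := by
    intro z hz
    simp only [Set.mem_insert_iff, Set.mem_singleton_iff] at hz
    rcases hz with h | h <;> rw [h]
    · exact huv.symm
    · exact hadj_lc
  have hfinv := nbhd_finite h3v
  have hdiff : (G.neighborSet v \ {u, lc}).ncard = 1 := by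
    rw [Set.ncard_diff hsubv ((Set.finite_singleton lc).insert u), ncard3 h3v, Set.ncard_pair hulc]
  obtain ⟨w, hw⟩ := Set.ncard_eq_one.mp hdiff
  have hwmem : w ∈ G.neighborSet v := by
    have : w ∈ G.neighborSet v \ {u, lc} := by rw [hw]; rfl
    exact this.1
  have hwne : w ≠ u ∧ w ≠ lc := by
    have : w ∈ G.neighborSet v \ {u, lc} := by rw [hw]; rfl
    have h2 := this.2
    simp only [Set.mem_insert_iff, Set.mem_singleton_iff] at h2
    push_neg at h2
    exact h2
  have hveq : G.neighborSet v = {u, lc, w} := by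
    have : ({u, lc} : Set V) ∪ (G.neighborSet v \ {u, lc}) = G.neighborSet v :=
      Set.union_diff_cancel hsubv
    rw [hw] at this
    rw [← this]
    ext z
    simp only [Set.mem_union, Set.mem_insert_iff, Set.mem_singleton_iff]
    tauto
  refine ⟨w, hveq, ?_⟩
  have hwv : w ≠ v := (G.mem_neighborSet v w |>.mp hwmem).ne'
  have hwla : w ≠ la := by
    rintro rfl
    have : v ∈ G.neighborSet w := (G.mem_neighborSet v w |>.mp hwmem).symm
    rw [h1a, Set.mem_singleton_iff] at this
    exact huv.ne this.symm
  have hwlb : w ≠ lb := by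
    rintro rfl
    have : v ∈ G.neighborSet w := (G.mem_neighborSet v w |>.mp hwmem).symm
    rw [h1b, Set.mem_singleton_iff] at this
    exact huv.ne this.symm
  simp only [Set.mem_insert_iff, Set.mem_singleton_iff]
  push_neg
  exact ⟨hwne.1, hwv, hwla, hwlb, hwne.2⟩

lemma config_contra {u v la lb lc : V} (huv : G.Adj u v)
    (h3u : Nat.card (G.neighborSet u) = 3) (h3v : Nat.card (G.neighborSet v) = 3)
    (h1a : G.neighborSet la = {u}) (h1b : G.neighborSet lb = {u}) (h1c : G.neighborSet lc = {u})
    (hab : la ≠ lb) (hac : la ≠ lc) (hbc : lb ≠ lc) : False := by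
  have hadj : ∀ ℓ, G.neighborSet ℓ = {u} → G.Adj u ℓ := fun ℓ h =>
    ((G.mem_neighborSet ℓ u).mp (by rw [h]; rfl)).symm
  have hnv : ∀ ℓ, G.neighborSet ℓ = {u} → ℓ ≠ v := by
    rintro ℓ h rfl
    rw [h] at h3v
    simp [Nat.card_coe_set_eq] at h3v
  have hsub : ({v, la, lb, lc} : Set V) ⊆ G.neighborSet u := by
    intro z hz
    simp only [Set.mem_insert_iff, Set.mem_singleton_iff] at hz
    rcases hz with h | h | h | h <;> rw [h]
    · exact huv
    · exact hadj la h1a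
    · exact hadj lb h1b
    · exact hadj lc h1c
  have hcard : ({v, la, lb, lc} : Set V).ncard = 4 := by
    rw [Set.ncard_insert_of_notMem (by
      simp only [Set.mem_insert_iff, Set.mem_singleton_iff]
      push_neg
      exact ⟨Ne.symm (hnv la h1a), Ne.symm (hnv lb h1b), Ne.symm (hnv lc h1c)⟩)
      (((Set.finite_singleton lc).insert lb).insert la)]
    rw [Set.ncard_insert_of_notMem (by simp [hab, hac])
      ((Set.finite_singleton lc).insert lb)]
    rw [Set.ncard_insert_of_notMem (by simp [hbc]) (Set.finite_singleton lc)]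
    simp
  have := Set.ncard_le_ncard hsub (nbhd_finite h3u)
  rw [hcard, ncard3 h3u] at this
  omega


lemma relabel_symm {X : Type} {T T' : PhyloTree X} {π : Equiv.Perm X}
    (h : RelabelOf T T' π) : RelabelOf T' T π⁻¹ := by
  obtain ⟨f, hadj, hlab⟩ := h
  refine ⟨f.symm, ?_, ?_⟩
  · intro a b
    rw [hadj (f.symm a) (f.symm b)]
    simp
  · intro x
    have := hlab (π⁻¹ x)
    apply_fun f.symm at this
    simpa using this.symm

def delHom {V W : Type} {G : SimpleGraph V} {G' : SimpleGraph W} (f : V ≃ W)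
    (hadj : ∀ u v, G.Adj u v ↔ G'.Adj (f u) (f v)) (e : Sym2 V) :
    G.deleteEdges {e} →g G'.deleteEdges {Sym2.map f e} where
  toFun := f
  map_rel' := by
    intro a b hab
    rw [SimpleGraph.deleteEdges_adj] at hab ⊢
    refine ⟨(hadj a b).mp hab.1, ?_⟩
    intro hc
    rw [Set.mem_singleton_iff] at hc
    have : Sym2.map f s(a,b) = Sym2.map f e := by rwa [Sym2.map_pair_eq]
    exact hab.2 (Sym2.map.injective f.injective this)

def delHom' {V W : Type} {G : SimpleGraph V} {G' : SimpleGraph W} (f : V ≃ W)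
    (hadj : ∀ u v, G.Adj u v ↔ G'.Adj (f u) (f v)) (e : Sym2 V) :
    G'.deleteEdges {Sym2.map f e} →g G.deleteEdges {e} where
  toFun := f.symm
  map_rel' := by
    intro a b hab
    rw [SimpleGraph.deleteEdges_adj] at hab ⊢
    constructor
    · rw [hadj (f.symm a) (f.symm b)]
      simpa using hab.1
    · intro hc
      rw [Set.mem_singleton_iff] at hc
      apply hab.2
      rw [Set.mem_singleton_iff]
      have : Sym2.map f s(f.symm a, f.symm b) = Sym2.map f e := by rw [hc]
      rw [Sym2.map_pair_eq] at this
      simpa using this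

lemma sep_map {V W : Type} {G : SimpleGraph V} {G' : SimpleGraph W} (f : V ≃ W)
    (hadj : ∀ u v, G.Adj u v ↔ G'.Adj (f u) (f v)) {e : Sym2 V} {A B C D : V}
    (hS : Separates G e A B C D) :
    Separates G' (Sym2.map f e) (f A) (f B) (f C) (f D) := by
  obtain ⟨hmem, hAB, hCD, hAC⟩ := hS
  refine ⟨?_, ?_, ?_, ?_⟩
  · induction e with
    | _ α β =>
      rw [Sym2.map_pair_eq, SimpleGraph.mem_edgeSet] at *
      exact (hadj α β).mp hmem
  · exact hAB.map (delHom f hadj e)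
  · exact hCD.map (delHom f hadj e)
  · intro h
    have h2 : (G.deleteEdges {e}).Reachable (f.symm (f A)) (f.symm (f C)) :=
      h.map (delHom' f hadj e)
    simp only [Equiv.symm_apply_apply] at h2
    exact hAC h2

lemma displays_relabel {X : Type} {T T' : PhyloTree X} {π : Equiv.Perm X}
    (h : RelabelOf T T' π) (p q r s : X) :
    T.Displays p q r s → T'.Displays (π p) (π q) (π r) (π s) := by
  obtain ⟨f, hadj, hlab⟩ := h
  rintro ⟨e, hS⟩
  refine ⟨Sym2.map f e, ?_⟩
  have := sep_map f hadj hS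
  rwa [hlab p, hlab q, hlab r, hlab s] at this


lemma main_invariance {X : Type} [DecidableEq X] (T : PhyloTree X) (a b c : X)
    (hab : a ≠ b) (hac : a ≠ c) (hbc : b ≠ c)
    (u v : T.V) (huv : T.g.Adj u v)
    (hu3 : Nat.card (T.g.neighborSet u) = 3) (hv3 : Nat.card (T.g.neighborSet v) = 3)
    (haa : T.g.Adj u (T.lab a) ∨ T.g.Adj v (T.lab a))
    (hbb : T.g.Adj u (T.lab b) ∨ T.g.Adj v (T.lab b))
    (hcc : T.g.Adj u (T.lab c) ∨ T.g.Adj v (T.lab c))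
    (τ : Equiv.Perm X) (hτ : ∀ x, x ≠ a → x ≠ b → x ≠ c → τ x = x)
    (p q r s t0 : X) (ht0abc : t0 = a ∨ t0 = b ∨ t0 = c)
    (ht0 : t0 ≠ p ∧ t0 ≠ q ∧ t0 ≠ r ∧ t0 ≠ s) :
    T.Displays p q r s → T.Displays (τ p) (τ q) (τ r) (τ s) := by
  rintro ⟨e, hS⟩
  have hconn : T.g.Connected := T.tree.isConnected
  have hdeg1 : ∀ x : X, Nat.card (T.g.neighborSet (T.lab x)) = 1 :=
    fun x => (T.leaf_iff _).mpr ⟨x, rfl⟩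
  have hnb : ∀ x : X, ∃ n, T.g.neighborSet (T.lab x) = {n} := by
    intro x
    have := hdeg1 x
    rwa [Nat.card_coe_set_eq, Set.ncard_eq_one] at this
  have hLne : ∀ (x : X) (z : T.V), Nat.card (T.g.neighborSet z) = 3 → T.lab x ≠ z := by
    intro x z h3 heq
    have := hdeg1 x
    rw [heq, h3] at this
    omega
  have hτmem : ∀ t : X, (t = a ∨ t = b ∨ t = c) → (τ t = a ∨ τ t = b ∨ τ t = c) := by
    intro t htm
    by_contra hcon
    push_neg at hcon
    have h1 : τ (τ t) = τ t := hτ (τ t) hcon.1 hcon.2.1 hcon.2.2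
    have h2 : τ t = t := τ.injective h1
    rw [h2] at hcon
    rcases htm with h | h | h
    · exact hcon.1 h
    · exact hcon.2.1 h
    · exact hcon.2.2 h
  -- attachment data
  have hmm : ∀ g : X, (g = a ∨ g = b ∨ g = c) →
      ∃ n, (n = u ∨ n = v) ∧ T.g.neighborSet (T.lab g) = {n} := by
    intro g hg
    obtain ⟨n, hn⟩ := hnb g
    have hadj : T.g.Adj u (T.lab g) ∨ T.g.Adj v (T.lab g) := by
      rcases hg with rfl | rfl | rfl
      · exact haa
      · exact hbb
      · exact hcc
    rcases hadj with h | h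
    · refine ⟨n, Or.inl ?_, hn⟩
      have : u ∈ T.g.neighborSet (T.lab g) := h.symm
      rw [hn, Set.mem_singleton_iff] at this
      exact this.symm
    · refine ⟨n, Or.inr ?_, hn⟩
      have : v ∈ T.g.neighborSet (T.lab g) := h.symm
      rw [hn, Set.mem_singleton_iff] at this
      exact this.symm
  obtain ⟨na, hna, h1a⟩ := hmm a (Or.inl rfl)
  obtain ⟨nb, hnb', h1b⟩ := hmm b (Or.inr (Or.inl rfl))
  obtain ⟨nc, hnc, h1c⟩ := hmm c (Or.inr (Or.inr rfl))
  have hLab : T.lab a ≠ T.lab b := fun h => hab (T.inj h)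
  have hLac : T.lab a ≠ T.lab c := fun h => hac (T.inj h)
  have hLbc : T.lab b ≠ T.lab c := fun h => hbc (T.inj h)
  -- configuration
  have hcfg : ∃ (m m' w : T.V) (x y z : X),
      (x = a ∨ x = b ∨ x = c) ∧ (y = a ∨ y = b ∨ y = c) ∧ (z = a ∨ z = b ∨ z = c) ∧
      x ≠ y ∧ x ≠ z ∧ y ≠ z ∧
      T.g.neighborSet m' = {m, T.lab x, T.lab y} ∧
      T.g.neighborSet m = {m', T.lab z, w} ∧
      T.g.neighborSet (T.lab x) = {m'} ∧ T.g.neighborSet (T.lab y) = {m'} ∧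
      T.g.neighborSet (T.lab z) = {m} ∧
      (w ≠ m ∧ w ≠ m' ∧ w ≠ T.lab x ∧ w ≠ T.lab y ∧ w ≠ T.lab z) ∧
      Nat.card (T.g.neighborSet m) = 3 ∧ Nat.card (T.g.neighborSet m') = 3 := by
    rcases hna with h | h <;> rcases hnb' with h' | h' <;> rcases hnc with h'' | h'' <;>
      rw [h] at h1a <;> rw [h'] at h1b <;> rw [h''] at h1c
    · exact absurd (config_contra huv hu3 hv3 h1a h1b h1c hLab hLac hLbc) not_false
    · obtain ⟨hnu, w, hnv, hw⟩ := config_helper huv hu3 hv3 h1a h1b h1c hLab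
      simp only [Set.mem_insert_iff, Set.mem_singleton_iff] at hw
      push_neg at hw
      exact ⟨v, u, w, a, b, c, Or.inl rfl, Or.inr (Or.inl rfl), Or.inr (Or.inr rfl),
        hab, hac, hbc, hnu, hnv, h1a, h1b, h1c,
        ⟨hw.2.1, hw.1, hw.2.2.1, hw.2.2.2.1, hw.2.2.2.2⟩, hv3, hu3⟩
    · obtain ⟨hnu, w, hnv, hw⟩ := config_helper huv hu3 hv3 h1a h1c h1b hLac
      simp only [Set.mem_insert_iff, Set.mem_singleton_iff] at hw
      push_neg at hw
      exact ⟨v, u, w, a, c, b, Or.inl rfl, Or.inr (Or.inr rfl), Or.inr (Or.inl rfl),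
        hac, hab, hbc.symm, hnu, hnv, h1a, h1c, h1b,
        ⟨hw.2.1, hw.1, hw.2.2.1, hw.2.2.2.1, hw.2.2.2.2⟩, hv3, hu3⟩
    · obtain ⟨hnu, w, hnv, hw⟩ := config_helper huv.symm hv3 hu3 h1b h1c h1a hLbc
      simp only [Set.mem_insert_iff, Set.mem_singleton_iff] at hw
      push_neg at hw
      exact ⟨u, v, w, b, c, a, Or.inr (Or.inl rfl), Or.inr (Or.inr rfl), Or.inl rfl,
        hbc, hab.symm, hac.symm, hnu, hnv, h1b, h1c, h1a,
        ⟨hw.2.1, hw.1, hw.2.2.1, hw.2.2.2.1, hw.2.2.2.2⟩, hu3, hv3⟩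
    · obtain ⟨hnu, w, hnv, hw⟩ := config_helper huv hu3 hv3 h1b h1c h1a hLbc
      simp only [Set.mem_insert_iff, Set.mem_singleton_iff] at hw
      push_neg at hw
      exact ⟨v, u, w, b, c, a, Or.inr (Or.inl rfl), Or.inr (Or.inr rfl), Or.inl rfl,
        hbc, hab.symm, hac.symm, hnu, hnv, h1b, h1c, h1a,
        ⟨hw.2.1, hw.1, hw.2.2.1, hw.2.2.2.1, hw.2.2.2.2⟩, hv3, hu3⟩
    · obtain ⟨hnu, w, hnv, hw⟩ := config_helper huv.symm hv3 hu3 h1a h1c h1b hLac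
      simp only [Set.mem_insert_iff, Set.mem_singleton_iff] at hw
      push_neg at hw
      exact ⟨u, v, w, a, c, b, Or.inl rfl, Or.inr (Or.inr rfl), Or.inr (Or.inl rfl),
        hac, hab, hbc.symm, hnu, hnv, h1a, h1c, h1b,
        ⟨hw.2.1, hw.1, hw.2.2.1, hw.2.2.2.1, hw.2.2.2.2⟩, hu3, hv3⟩
    · obtain ⟨hnu, w, hnv, hw⟩ := config_helper huv.symm hv3 hu3 h1a h1b h1c hLab
      simp only [Set.mem_insert_iff, Set.mem_singleton_iff] at hw
      push_neg at hw
      exact ⟨u, v, w, a, b, c, Or.inl rfl, Or.inr (Or.inl rfl), Or.inr (Or.inr rfl),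
        hab, hac, hbc, hnu, hnv, h1a, h1b, h1c,
        ⟨hw.2.1, hw.1, hw.2.2.1, hw.2.2.2.1, hw.2.2.2.2⟩, hu3, hv3⟩
    · exact absurd (config_contra huv.symm hv3 hu3 h1a h1b h1c hLab hLac hLbc) not_false
  clear hna hnb' hnc h1a h1b h1c hmm
  obtain ⟨m, m', w, x, y, z, hxabc, hyabc, hzabc, hxy, hxz, hyz,
    hm', hm, h1x, h1y, h1z, hwne, hdm, hdm'⟩ := hcfg
  -- derived facts
  have hadjm'm : T.g.Adj m' m := by
    have : m ∈ T.g.neighborSet m' := by rw [hm']; exact Set.mem_insert m _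
    exact this
  have hmm'ne : m ≠ m' := hadjm'm.ne'
  have hadjmw : T.g.Adj m w := by
    have : w ∈ T.g.neighborSet m := by
      rw [hm]
      exact Set.mem_insert_iff.mpr (Or.inr (Set.mem_insert_iff.mpr (Or.inr rfl)))
    exact this
  have hLm : ∀ g : X, T.lab g ≠ m := fun g => hLne g m hdm
  have hLm' : ∀ g : X, T.lab g ≠ m' := fun g => hLne g m' hdm'
  have hLinj : ∀ g g' : X, g ≠ g' → T.lab g ≠ T.lab g' := fun g g' h hh => h (T.inj hh)
  -- taxa membership transfer
  have hxyzF : ({x, y, z} : Finset X) = {a, b, c} := by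
    apply Finset.eq_of_subset_of_card_le
    · intro t ht
      simp only [Finset.mem_insert, Finset.mem_singleton] at ht ⊢
      rcases ht with rfl | rfl | rfl
      · exact hxabc
      · exact hyabc
      · exact hzabc
    · have h1 : ({a, b, c} : Finset X).card = 3 := by
        rw [Finset.card_insert_of_notMem (by simp [hab, hac]),
          Finset.card_insert_of_notMem (by simp [hbc]), Finset.card_singleton]
      have h2 : ({x, y, z} : Finset X).card = 3 := by
        rw [Finset.card_insert_of_notMem (by simp [hxy, hxz]),
          Finset.card_insert_of_notMem (by simp [hyz]), Finset.card_singleton]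
      omega
  have habc_mem : ∀ g : X, (g = a ∨ g = b ∨ g = c) → (g = x ∨ g = y ∨ g = z) := by
    intro g hg
    have : g ∈ ({a, b, c} : Finset X) := by
      simp only [Finset.mem_insert, Finset.mem_singleton]
      exact hg
    rw [← hxyzF] at this
    simpa using this
  have hxyz_abc : ∀ g : X, (g = x ∨ g = y ∨ g = z) → (g = a ∨ g = b ∨ g = c) := by
    intro g hg
    have : g ∈ ({x, y, z} : Finset X) := by
      simp only [Finset.mem_insert, Finset.mem_singleton]
      exact hg
    rw [hxyzF] at this
    simpa using this
  have hτfix : ∀ g : X, ¬(g = a ∨ g = b ∨ g = c) → τ g = g := by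
    intro g hg
    push_neg at hg
    exact hτ g hg.1 hg.2.1 hg.2.2
  -- the leaf-edge helper
  have leafdone : ∀ (g : X) (n : T.V), T.g.neighborSet (T.lab g) = {n} →
      e = s(T.lab g, n) → T.Displays (τ p) (τ q) (τ r) (τ s) := by
    intro g n h1g he
    rw [he] at hS
    obtain ⟨n', h1'⟩ := hnb (τ g)
    rcases leaf_classify hconn h1g hS with ⟨hA, hB, hC, hD⟩ | ⟨hC, hD, hA, hB⟩
    · have hp : p = g := T.inj hA
      have hq : q = g := T.inj hB
      have hr : τ r ≠ τ g := fun h => hC (by rw [τ.injective h])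
      have hs' : τ s ≠ τ g := fun h => hD (by rw [τ.injective h])
      rw [hp, hq]
      exact ⟨s(T.lab (τ g), n'),
        (leaf_display hconn h1' (hLinj _ _ hr) (hLinj _ _ hs')).1⟩
    · have hr : r = g := T.inj hC
      have hs' : s = g := T.inj hD
      have hp : τ p ≠ τ g := fun h => hA (by rw [τ.injective h])
      have hq : τ q ≠ τ g := fun h => hB (by rw [τ.injective h])
      rw [hr, hs']
      exact ⟨s(T.lab (τ g), n'),
        (leaf_display hconn h1' (hLinj _ _ hp) (hLinj _ _ hq)).2⟩
  by_cases hE1 : e = s(T.lab x, m')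
  · exact leafdone x m' h1x hE1
  by_cases hE2 : e = s(T.lab y, m')
  · exact leafdone y m' h1y hE2
  by_cases hE3 : e = s(T.lab z, m)
  · exact leafdone z m h1z hE3
  by_cases hE4 : e = s(m', m)
  · -- the interior edge case
    rw [hE4] at hS
    obtain ⟨hmem, hpq, hrs, hpr⟩ := hS
    have hSne : ∀ g : X, s(T.lab g, m') ≠ s(m', m) := by
      intro g h
      rw [Sym2.eq_iff] at h
      rcases h with ⟨h1, -⟩ | ⟨h1, -⟩
      · exact hLm' g h1
      · exact hLm g h1
    have cherryR : ∀ g g' : X, (g = x ∨ g = y) → (g' = x ∨ g' = y) →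
        (T.g.deleteEdges {s(m', m)}).Reachable (T.lab g) (T.lab g') := by
      have hx' : (T.g.deleteEdges {s(m', m)}).Reachable (T.lab x) (T.lab y) := by
        refine (reach_del_of_adj (adj_of_nbhd h1x) (hSne x)).trans ?_
        refine Reachable.symm (reach_del_of_adj (adj_of_nbhd h1y) (hSne y))
      intro g g' hg hg'
      rcases hg with rfl | rfl <;> rcases hg' with rfl | rfl
      · exact Reachable.refl _
      · exact hx'
      · exact hx'.symm
      · exact Reachable.refl _
    have hnotcherry : ∀ g : X, ¬(g = x ∨ g = y) →
        T.lab g ≠ T.lab x ∧ T.lab g ≠ T.lab y := by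
      intro g hg
      push_neg at hg
      exact ⟨hLinj _ _ hg.1, hLinj _ _ hg.2⟩
    have hp_or : (p = x ∨ p = y) ∨ (r = x ∨ r = y) := by
      by_contra hcon
      push_neg at hcon
      exact hpr (cherry_reach hconn hm' h1x h1y (hLinj _ _ hcon.1.1) (hLinj _ _ hcon.1.2)
        (hLinj _ _ hcon.2.1) (hLinj _ _ hcon.2.2) (hLm' p) (hLm' r))
    have hLcherry : ∀ g : X, (g = x ∨ g = y) → (T.lab g = T.lab x ∨ T.lab g = T.lab y) := by
      intro g hg
      rcases hg with rfl | rfl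
      · exact Or.inl rfl
      · exact Or.inr rfl
    -- abc-side reachability for the edge s(m,w)
    have hWne : ∀ g : X, s(T.lab g, m') ≠ s(m, w) := by
      intro g h
      rw [Sym2.eq_iff] at h
      rcases h with ⟨h1, -⟩ | ⟨-, h2⟩
      · exact hLm g h1
      · exact hmm'ne h2.symm
    have hWne2 : s(m', m) ≠ s(m, w) := by
      intro h
      rw [Sym2.eq_iff] at h
      rcases h with ⟨h1, -⟩ | ⟨h1, -⟩
      · exact hmm'ne h1.symm
      · exact hwne.2.1 h1.symm
    have hWne3 : s(T.lab z, m) ≠ s(m, w) := by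
      intro h
      rw [Sym2.eq_iff] at h
      rcases h with ⟨h1, -⟩ | ⟨h1, -⟩
      · exact hLm z h1
      · exact hwne.2.2.2.2 h1.symm
    have abcR : ∀ g g' : X, (g = x ∨ g = y ∨ g = z) → (g' = x ∨ g' = y ∨ g' = z) →
        (T.g.deleteEdges {s(m, w)}).Reachable (T.lab g) (T.lab g') := by
      have hxm' : (T.g.deleteEdges {s(m, w)}).Reachable (T.lab x) m' :=
        reach_del_of_adj (adj_of_nbhd h1x) (hWne x)
      have hym' : (T.g.deleteEdges {s(m, w)}).Reachable (T.lab y) m' :=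
        reach_del_of_adj (adj_of_nbhd h1y) (hWne y)
      have hzm' : (T.g.deleteEdges {s(m, w)}).Reachable (T.lab z) m' := by
        refine (reach_del_of_adj (adj_of_nbhd h1z) hWne3).trans ?_
        exact (reach_del_of_adj hadjm'm hWne2).symm
      have hh : ∀ g : X, (g = x ∨ g = y ∨ g = z) →
          (T.g.deleteEdges {s(m, w)}).Reachable (T.lab g) m' := by
        intro g hg
        rcases hg with rfl | rfl | rfl
        · exact hxm'
        · exact hym'
        · exact hzm'
      intro g g' hg hg'
      exact (hh g hg).trans (hh g' hg').symm
    have hd : T.lab x ≠ T.lab y ∧ T.lab x ≠ T.lab z ∧ T.lab y ≠ T.lab z ∧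
        T.lab x ≠ m ∧ T.lab x ≠ m' ∧ T.lab y ≠ m ∧ T.lab y ≠ m' ∧
        T.lab z ≠ m ∧ T.lab z ≠ m' ∧ m ≠ m' :=
      ⟨hLinj _ _ hxy, hLinj _ _ hxz, hLinj _ _ hyz, hLm x, hLm' x, hLm y, hLm' y,
        hLm z, hLm' z, hmm'ne⟩
    have hfar : ∀ g : X, ¬(g = a ∨ g = b ∨ g = c) →
        T.lab g ≠ T.lab x ∧ T.lab g ≠ T.lab y ∧ T.lab g ≠ T.lab z ∧
        T.lab g ≠ m ∧ T.lab g ≠ m' := by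
      intro g hg
      have h1 : g ≠ x := fun h => hg (hxyz_abc g (Or.inl h))
      have h2 : g ≠ y := fun h => hg (hxyz_abc g (Or.inr (Or.inl h)))
      have h3 : g ≠ z := fun h => hg (hxyz_abc g (Or.inr (Or.inr h)))
      exact ⟨hLinj _ _ h1, hLinj _ _ h2, hLinj _ _ h3, hLm g, hLm' g⟩
    have hmemw : s(m, w) ∈ T.g.edgeSet := hadjmw
    have hLxyz : ∀ g : X, (g = x ∨ g = y ∨ g = z) →
        (T.lab g = T.lab x ∨ T.lab g = T.lab y ∨ T.lab g = T.lab z) := by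
      intro g hg
      rcases hg with rfl | rfl | rfl
      · exact Or.inl rfl
      · exact Or.inr (Or.inl rfl)
      · exact Or.inr (Or.inr rfl)
    by_cases hp : p = x ∨ p = y
    · -- p (and q) in the cherry
      have hq : q = x ∨ q = y := by
        by_contra hq
        obtain ⟨hq1, hq2⟩ := hnotcherry q hq
        exact cherry_not_reach hconn hm' h1x h1y (hLinj _ _ hxy)
          (hLcherry p hp) hq1 hq2 (hLm' q) hpq
      have hr : ¬(r = x ∨ r = y) := by
        intro hr
        exact hpr (cherryR p r hp hr)
      have hs' : ¬(s = x ∨ s = y) := by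
        intro hs'
        obtain ⟨hr1, hr2⟩ := hnotcherry r hr
        exact cherry_not_reach hconn hm' h1x h1y (hLinj _ _ hxy)
          (hLcherry s hs') hr1 hr2 (hLm' r) hrs.symm
      have hp_abc : p = a ∨ p = b ∨ p = c := by
        rcases hp with rfl | rfl
        · exact hxabc
        · exact hyabc
      by_cases habc_rs : (r = a ∨ r = b ∨ r = c) ∨ (s = a ∨ s = b ∨ s = c)
      · -- then p = q, use a leaf edge
        have hpq' : p = q := by
          by_contra hne
          have hxy_pq : (p = x ∧ q = y) ∨ (p = y ∧ q = x) := by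
            rcases hp with h1 | h1 <;> rcases hq with h2 | h2
            · exact absurd (h1.trans h2.symm) hne
            · exact Or.inl ⟨h1, h2⟩
            · exact Or.inr ⟨h1, h2⟩
            · exact absurd (h1.trans h2.symm) hne
          have ht0z : t0 = z := by
            rcases habc_mem t0 ht0abc with h | h | h
            · exfalso
              rcases hxy_pq with ⟨h1, -⟩ | ⟨-, h2⟩
              · exact ht0.1 (h.trans h1.symm)
              · exact ht0.2.1 (h.trans h2.symm)
            · exfalso
              rcases hxy_pq with ⟨-, h2⟩ | ⟨h1, -⟩
              · exact ht0.2.1 (h.trans h2.symm)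
              · exact ht0.1 (h.trans h1.symm)
            · exact h
          rcases habc_rs with hg | hg
          · have hrz : r = z := by
              rcases habc_mem r hg with h | h | h
              · exact absurd (Or.inl h) hr
              · exact absurd (Or.inr h) hr
              · exact h
            exact ht0.2.2.1 (ht0z.trans hrz.symm)
          · have hsz : s = z := by
              rcases habc_mem s hg with h | h | h
              · exact absurd (Or.inl h) hs'
              · exact absurd (Or.inr h) hs'
              · exact h
            exact ht0.2.2.2 (ht0z.trans hsz.symm)
        obtain ⟨n', h1'⟩ := hnb (τ p)
        have hrp : τ r ≠ τ p := fun h => (by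
          have := τ.injective h
          rcases hp with rfl | rfl
          · exact hr (Or.inl this)
          · exact hr (Or.inr this))
        have hsp : τ s ≠ τ p := fun h => (by
          have := τ.injective h
          rcases hp with rfl | rfl
          · exact hs' (Or.inl this)
          · exact hs' (Or.inr this))
        rw [← hpq']
        exact ⟨s(T.lab (τ p), n'),
          (leaf_display hconn h1' (hLinj _ _ hrp) (hLinj _ _ hsp)).1⟩
      · -- r, s far away: use the edge s(m,w)
        rw [not_or] at habc_rs
        have hτr : τ r = r := hτfix r habc_rs.1
        have hτs : τ s = s := hτfix s habc_rs.2
        have hτp_xyz : τ p = x ∨ τ p = y ∨ τ p = z := habc_mem _ (hτmem p hp_abc)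
        have hτq_xyz : τ q = x ∨ τ q = y ∨ τ q = z := by
          refine habc_mem _ (hτmem q ?_)
          rcases hq with rfl | rfl
          · exact hxabc
          · exact hyabc
        rw [hτr, hτs]
        refine ⟨s(m, w), hmemw, abcR _ _ hτp_xyz hτq_xyz,
          far_reach hconn hm hm' h1x h1y h1z (hfar r habc_rs.1) (hfar s habc_rs.2), ?_⟩
        exact far_not_reach hm hm' h1x h1y h1z hd (hLxyz _ hτp_xyz) (hfar r habc_rs.1)
    · -- r (and s) in the cherry
      have hr : r = x ∨ r = y := hp_or.resolve_left hp
      have hq : ¬(q = x ∨ q = y) := by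
        intro hq
        obtain ⟨hp1, hp2⟩ := hnotcherry p hp
        exact cherry_not_reach hconn hm' h1x h1y (hLinj _ _ hxy)
          (hLcherry q hq) hp1 hp2 (hLm' p) hpq.symm
      have hs' : s = x ∨ s = y := by
        by_contra hs'
        obtain ⟨hs1, hs2⟩ := hnotcherry s hs'
        exact cherry_not_reach hconn hm' h1x h1y (hLinj _ _ hxy)
          (hLcherry r hr) hs1 hs2 (hLm' s) hrs
      have hr_abc : r = a ∨ r = b ∨ r = c := by
        rcases hr with rfl | rfl
        · exact hxabc
        · exact hyabc
      by_cases habc_pq : (p = a ∨ p = b ∨ p = c) ∨ (q = a ∨ q = b ∨ q = c)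
      · -- then r = s, use a leaf edge
        have hrs' : r = s := by
          by_contra hne
          have hxy_rs : (r = x ∧ s = y) ∨ (r = y ∧ s = x) := by
            rcases hr with h1 | h1 <;> rcases hs' with h2 | h2
            · exact absurd (h1.trans h2.symm) hne
            · exact Or.inl ⟨h1, h2⟩
            · exact Or.inr ⟨h1, h2⟩
            · exact absurd (h1.trans h2.symm) hne
          have ht0z : t0 = z := by
            rcases habc_mem t0 ht0abc with h | h | h
            · exfalso
              rcases hxy_rs with ⟨h1, -⟩ | ⟨-, h2⟩
              · exact ht0.2.2.1 (h.trans h1.symm)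
              · exact ht0.2.2.2 (h.trans h2.symm)
            · exfalso
              rcases hxy_rs with ⟨-, h2⟩ | ⟨h1, -⟩
              · exact ht0.2.2.2 (h.trans h2.symm)
              · exact ht0.2.2.1 (h.trans h1.symm)
            · exact h
          rcases habc_pq with hg | hg
          · have hpz : p = z := by
              rcases habc_mem p hg with h | h | h
              · exact absurd (Or.inl h) hp
              · exact absurd (Or.inr h) hp
              · exact h
            exact ht0.1 (ht0z.trans hpz.symm)
          · have hqz : q = z := by
              rcases habc_mem q hg with h | h | h
              · exact absurd (Or.inl h) hq
              · exact absurd (Or.inr h) hq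
              · exact h
            exact ht0.2.1 (ht0z.trans hqz.symm)
        obtain ⟨n', h1'⟩ := hnb (τ r)
        have hpr' : τ p ≠ τ r := fun h => (by
          have := τ.injective h
          rcases hr with rfl | rfl
          · exact hp (Or.inl this)
          · exact hp (Or.inr this))
        have hqr : τ q ≠ τ r := fun h => (by
          have := τ.injective h
          rcases hr with rfl | rfl
          · exact hq (Or.inl this)
          · exact hq (Or.inr this))
        rw [← hrs']
        exact ⟨s(T.lab (τ r), n'),
          (leaf_display hconn h1' (hLinj _ _ hpr') (hLinj _ _ hqr)).2⟩
      · rw [not_or] at habc_pq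
        have hτp : τ p = p := hτfix p habc_pq.1
        have hτq : τ q = q := hτfix q habc_pq.2
        have hτr_xyz : τ r = x ∨ τ r = y ∨ τ r = z := habc_mem _ (hτmem r hr_abc)
        have hτs_xyz : τ s = x ∨ τ s = y ∨ τ s = z := by
          refine habc_mem _ (hτmem s ?_)
          rcases hs' with rfl | rfl
          · exact hxabc
          · exact hyabc
        rw [hτp, hτq]
        refine ⟨s(m, w), hmemw,
          far_reach hconn hm hm' h1x h1y h1z (hfar p habc_pq.1) (hfar q habc_pq.2),
          abcR _ _ hτr_xyz hτs_xyz, ?_⟩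
        intro hcon
        exact far_not_reach hm hm' h1x h1y h1z hd (hLxyz _ hτr_xyz)
          (hfar p habc_pq.1) hcon.symm
  · -- generic case: e avoids the whole gadget
    have hne1 : s(T.lab x, m') ≠ e := fun h => hE1 h.symm
    have hne2 : s(T.lab y, m') ≠ e := fun h => hE2 h.symm
    have hne3 : s(T.lab z, m) ≠ e := fun h => hE3 h.symm
    have hne4 : s(m', m) ≠ e := fun h => hE4 h.symm
    have hxy' : (T.g.deleteEdges {e}).Reachable (T.lab x) (T.lab y) :=
      (reach_del_of_adj (adj_of_nbhd h1x) hne1).trans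
        (reach_del_of_adj (adj_of_nbhd h1y) hne2).symm
    have hxz' : (T.g.deleteEdges {e}).Reachable (T.lab x) (T.lab z) := by
      refine (reach_del_of_adj (adj_of_nbhd h1x) hne1).trans ?_
      refine (Reachable.trans (reach_del_of_adj hadjm'm hne4) ?_)
      exact (reach_del_of_adj (adj_of_nbhd h1z) hne3).symm
    have hhub : ∀ g : X, (g = x ∨ g = y ∨ g = z) →
        (T.g.deleteEdges {e}).Reachable (T.lab x) (T.lab g) := by
      intro g hg
      rcases hg with rfl | rfl | rfl
      · exact Reachable.refl _
      · exact hxy'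
      · exact hxz'
    have hR : ∀ g : X, (T.g.deleteEdges {e}).Reachable (T.lab g) (T.lab (τ g)) := by
      intro g
      by_cases hg : g = a ∨ g = b ∨ g = c
      · exact (hhub g (habc_mem g hg)).symm.trans (hhub (τ g) (habc_mem _ (hτmem g hg)))
      · rw [hτfix g hg]
    obtain ⟨hmem, hpq, hrs, hpr⟩ := hS
    exact ⟨e, hmem, (hR p).symm.trans (hpq.trans (hR q)),
      (hR r).symm.trans (hrs.trans (hR s)),
      fun h => hpr ((hR p).trans (h.trans (hR r).symm))⟩


lemma perm_abc {X : Type} {a b c : X} (π : Equiv.Perm X)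
    (hπ : ∀ x, x ≠ a → x ≠ b → x ≠ c → π x = x)
    (t : X) (ht : t = a ∨ t = b ∨ t = c) : π t = a ∨ π t = b ∨ π t = c := by
  by_contra hcon
  push_neg at hcon
  have h1 : π (π t) = π t := hπ (π t) hcon.1 hcon.2.1 hcon.2.2
  have h2 : π t = t := π.injective h1
  rw [h2] at hcon
  rcases ht with h | h | h
  · exact hcon.1 h
  · exact hcon.2.1 h
  · exact hcon.2.2 h

end PF

/-- For three caterpillar trees on `n ≥ 5` leaves differing only in the arrangement of the
three taxa `a, b, c` attached at the internal vertices incident to the first interior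
edge, the restrictions to any 4-element taxon subset `Y` not containing all of
`{a, b, c}` agree. -/
theorem stmt_16 {X : Type} [Fintype X] [DecidableEq X] (hn : 5 ≤ Fintype.card X)
    (T₁ T₂ T₃ : PhyloTree X) (a b c : X)
    (hab : a ≠ b) (hac : a ≠ c) (hbc : b ≠ c)
    (hc₁ : IsCaterpillar T₁) (hc₂ : IsCaterpillar T₂) (hc₃ : IsCaterpillar T₃)
    (u v : T₁.V) (huv : T₁.g.Adj u v)
    (hu : Nat.card (T₁.g.neighborSet u) = 3) (hv : Nat.card (T₁.g.neighborSet v) = 3)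
    (ha : T₁.g.Adj u (T₁.lab a) ∨ T₁.g.Adj v (T₁.lab a))
    (hb : T₁.g.Adj u (T₁.lab b) ∨ T₁.g.Adj v (T₁.lab b))
    (hc : T₁.g.Adj u (T₁.lab c) ∨ T₁.g.Adj v (T₁.lab c))
    (π₂ π₃ : Equiv.Perm X)
    (hπ₂ : ∀ x, x ≠ a → x ≠ b → x ≠ c → π₂ x = x)
    (hπ₃ : ∀ x, x ≠ a → x ≠ b → x ≠ c → π₃ x = x)
    (h₂ : RelabelOf T₁ T₂ π₂) (h₃ : RelabelOf T₁ T₃ π₃) :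
    ∀ Y : Finset X, Y.card = 4 → ¬ ({a, b, c} : Finset X) ⊆ Y →
      AgreeOn T₁ T₂ Y ∧ AgreeOn T₁ T₃ Y ∧ AgreeOn T₂ T₃ Y := by
  intro Y hY4 hYsub
  obtain ⟨t0, ht0mem, ht0Y⟩ := Finset.not_subset.mp hYsub
  have ht0abc : t0 = a ∨ t0 = b ∨ t0 = c := by simpa using ht0mem
  have agree : ∀ (T' : PhyloTree X) (π : Equiv.Perm X),
      (∀ x, x ≠ a → x ≠ b → x ≠ c → π x = x) → RelabelOf T₁ T' π → AgreeOn T₁ T' Y := by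
    intro T' π hπ hrel p q r s hp hq hr hs
    have ht0v : t0 ≠ p ∧ t0 ≠ q ∧ t0 ≠ r ∧ t0 ≠ s :=
      ⟨fun h => ht0Y (h ▸ hp), fun h => ht0Y (h ▸ hq),
        fun h => ht0Y (h ▸ hr), fun h => ht0Y (h ▸ hs)⟩
    have hπinv : ∀ x, x ≠ a → x ≠ b → x ≠ c → π⁻¹ x = x := by
      intro x h1 h2 h3
      have := hπ x h1 h2 h3
      conv_lhs => rw [← this]
      simp
    constructor
    · intro hD
      have h1 : T₁.Displays (π⁻¹ p) (π⁻¹ q) (π⁻¹ r) (π⁻¹ s) :=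
        PF.main_invariance T₁ a b c hab hac hbc u v huv hu hv ha hb hc π⁻¹ hπinv
          p q r s t0 ht0abc ht0v hD
      have h2 := PF.displays_relabel hrel _ _ _ _ h1
      simpa using h2
    · intro hD
      have h1 : T₁.Displays (π⁻¹ p) (π⁻¹ q) (π⁻¹ r) (π⁻¹ s) :=
        PF.displays_relabel (PF.relabel_symm hrel) p q r s hD
      have ht0' : π⁻¹ t0 = a ∨ π⁻¹ t0 = b ∨ π⁻¹ t0 = c :=
        PF.perm_abc π⁻¹ hπinv t0 ht0abc
      have ht0v' : π⁻¹ t0 ≠ π⁻¹ p ∧ π⁻¹ t0 ≠ π⁻¹ q ∧ π⁻¹ t0 ≠ π⁻¹ r ∧ π⁻¹ t0 ≠ π⁻¹ s :=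
        ⟨fun h => ht0v.1 ((Equiv.injective _) h), fun h => ht0v.2.1 ((Equiv.injective _) h),
          fun h => ht0v.2.2.1 ((Equiv.injective _) h),
          fun h => ht0v.2.2.2 ((Equiv.injective _) h)⟩
      have h2 := PF.main_invariance T₁ a b c hab hac hbc u v huv hu hv ha hb hc π hπ
        (π⁻¹ p) (π⁻¹ q) (π⁻¹ r) (π⁻¹ s) (π⁻¹ t0) ht0' ht0v' h1
      simpa using h2
  have A12 := agree T₂ π₂ hπ₂ h₂
  have A13 := agree T₃ π₃ hπ₃ h₃
  exact ⟨A12, A13, fun p q r s hp hq hr hs =>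
    ((A12 p q r s hp hq hr hs).symm).trans (A13 p q r s hp hq hr hs)⟩
end
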